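/- arXiv:2512.12256 — 7 statements merged into one kernel-verified Lean document; each statement's English description precedes it below -/
import Mathlib

section
/- There is a Borel (Borel-measurable) map f : ℝ^ℕ → ℕ^ℕ such that for all x, y ∈ ℝ^ℕ: there exists M ∈ ℝ with |x(n) − y(n)| < M for all n ∈ ℕ if and only if there exists M ∈ ℝ with |f(x)(n) − f(y)(n)| < M for all n ∈ ℕ. (That is, ℓ∞ is Borel reducible to its restriction ℓ∞↾ℕ^ℕ.) -/
lemma toNat_lip (a b : ℤ) : ((a.toNat : ℤ) - b.toNat).natAbs ≤ (a - b).natAbs := by omega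

lemma natAbs_le_parts (a b : ℤ) :
    (a - b).natAbs ≤ ((a.toNat : ℤ) - b.toNat).natAbs
      + (((-a).toNat : ℤ) - (-b).toNat).natAbs := by omega

lemma floor_abs_le (x y : ℝ) : |((⌊x⌋ : ℝ)) - (⌊y⌋ : ℝ)| ≤ |x - y| + 1 := by
  have h1 := Int.floor_le x
  have h2 := Int.floor_le y
  have h3 := Int.lt_floor_add_one x
  have h4 := Int.lt_floor_add_one y
  have h5 := le_abs_self (x - y)
  have h6 := neg_abs_le (x - y)
  rw [abs_le]
  constructor <;> linarith

lemma abs_le_floor (x y : ℝ) : |x - y| ≤ |((⌊x⌋ : ℝ)) - (⌊y⌋ : ℝ)| + 1 := by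
  have h1 := Int.floor_le x
  have h2 := Int.floor_le y
  have h3 := Int.lt_floor_add_one x
  have h4 := Int.lt_floor_add_one y
  have h5 := le_abs_self ((⌊x⌋ : ℝ) - (⌊y⌋ : ℝ))
  have h6 := neg_abs_le ((⌊x⌋ : ℝ) - (⌊y⌋ : ℝ))
  rw [abs_le]
  constructor <;> linarith

lemma cast_natAbs_sub (m n : ℤ) : ((m - n).natAbs : ℝ) = |(m : ℝ) - n| := by
  rw [Nat.cast_natAbs]
  push_cast
  ring_nf

lemma cast_natAbs_subN (p q : ℕ) : (((p : ℤ) - (q : ℤ)).natAbs : ℝ) = |(p : ℝ) - q| := by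
  rw [Nat.cast_natAbs]
  push_cast
  ring_nf

/-- The equivalence relation `ℓ∞` on `ℝ^ℕ`: two sequences are equivalent iff
their difference is bounded. -/
def EllInfty (x y : ℕ → ℝ) : Prop := ∃ M : ℝ, ∀ n : ℕ, |x n - y n| < M

/-- `ℓ∞` is Borel reducible to its restriction to `ℕ^ℕ`: there is a Borel map
`f : ℝ^ℕ → ℕ^ℕ` such that `x ℓ∞ y` iff `f x` and `f y` have bounded difference. -/
theorem ellInfty_reducible_to_nat :
    ∃ f : (ℕ → ℝ) → (ℕ → ℕ), Measurable f ∧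
      ∀ x y : ℕ → ℝ,
        EllInfty x y ↔ ∃ M : ℝ, ∀ n : ℕ, |(f x n : ℝ) - (f y n : ℝ)| < M := by
  refine ⟨fun x n => (if Even n then ⌊x (n / 2)⌋ else -⌊x (n / 2)⌋).toNat, ?_, ?_⟩
  · apply measurable_pi_lambda
    intro n
    by_cases h : Even n <;> simp only [h, if_true, if_false, if_pos, if_neg, not_false_iff]
    · exact (measurable_from_top (f := Int.toNat)).comp
        (Int.measurable_floor.comp (measurable_pi_apply (n / 2)))
    · exact (measurable_from_top (f := Int.toNat)).comp
        ((Int.measurable_floor.comp (measurable_pi_apply (n / 2))).neg)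
  · intro x y
    constructor
    · rintro ⟨M, hM⟩
      refine ⟨M + 2, fun n => ?_⟩
      set a := ⌊x (n / 2)⌋ with ha
      set b := ⌊y (n / 2)⌋ with hb
      have key : (((if Even n then a else -a).toNat : ℤ)
          - ((if Even n then b else -b).toNat : ℤ)).natAbs ≤ (a - b).natAbs := by
        by_cases h : Even n <;> simp only [h, if_true, if_false] <;> omega
      have keyR : |(((if Even n then a else -a).toNat : ℝ))
          - ((if Even n then b else -b).toNat : ℝ)| ≤ ((a - b).natAbs : ℝ) := by
        rw [← cast_natAbs_subN]
        exact_mod_cast key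
      have h2 : ((a - b).natAbs : ℝ) = |((a : ℝ)) - (b : ℝ)| := cast_natAbs_sub a b
      have h3 := floor_abs_le (x (n / 2)) (y (n / 2))
      have h4 := hM (n / 2)
      calc |(((if Even n then a else -a).toNat : ℝ))
          - ((if Even n then b else -b).toNat : ℝ)| ≤ ((a - b).natAbs : ℝ) := keyR
        _ = |((a : ℝ)) - (b : ℝ)| := h2
        _ ≤ |x (n / 2) - y (n / 2)| + 1 := h3
        _ < M + 2 := by linarith
    · rintro ⟨M, hM⟩
      refine ⟨2 * M + 2, fun k => ?_⟩
      set a := ⌊x k⌋ with ha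
      set b := ⌊y k⌋ with hb
      have hMe := hM (2 * k)
      have hMo := hM (2 * k + 1)
      have he : Even (2 * k) := even_two_mul k
      have ho : ¬ Even (2 * k + 1) := by
        simp [Nat.even_add_one, Nat.even_iff]
      have de : (2 * k) / 2 = k := by omega
      have do' : (2 * k + 1) / 2 = k := by omega
      simp only [he, ho, de, do', if_true, if_false, ← ha, ← hb] at hMe hMo
      have key : (a - b).natAbs ≤ ((a.toNat : ℤ) - b.toNat).natAbs
          + (((-a).toNat : ℤ) - (-b).toNat).natAbs := natAbs_le_parts a b
      have keyR : |((a : ℝ)) - (b : ℝ)| ≤ |((a.toNat : ℝ)) - (b.toNat : ℝ)|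
          + |(((-a).toNat : ℝ)) - ((-b).toNat : ℝ)| := by
        rw [← cast_natAbs_sub, ← cast_natAbs_subN, ← cast_natAbs_subN]
        exact_mod_cast key
      have h3 := abs_le_floor (x k) (y k)
      calc |x k - y k| ≤ |((a : ℝ)) - (b : ℝ)| + 1 := h3
        _ ≤ |((a.toNat : ℝ)) - (b.toNat : ℝ)|
            + |(((-a).toNat : ℝ)) - ((-b).toNat : ℝ)| + 1 := by linarith
        _ < 2 * M + 2 := by linarith
end

section
/- The equivalence relation ℓ∞ is Borel reducible to uniform homeomorphism of path spaces of pruned trees: there is a Borel map Θ : ℝ^ℕ → 𝒯 such that for all x, y ∈ ℝ^ℕ, x ℓ∞ y if and only if the path spaces [Θ(x)] and [Θ(y)] are uniformly homeomorphic. -/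
open scoped Classical

/-- A pruned tree on ℕ: a nonempty set of finite sequences of naturals, closed
under initial segments, in which every element has a proper extension. -/
def IsPrunedTree (T : Set (List ℕ)) : Prop :=
  T.Nonempty ∧ (∀ s ∈ T, ∀ t : List ℕ, t <+: s → t ∈ T) ∧
    (∀ s ∈ T, ∃ t ∈ T, s <+: t ∧ s ≠ t)

/-- The path space `[T]` of a tree `T`. -/
def pathSpace (T : Set (List ℕ)) : Set (ℕ → ℕ) :=
  {x | ∀ n : ℕ, (List.ofFn fun i : Fin n => x i) ∈ T}

/-- The standard metric on sequences: `d(x,y) = 2^{-n}` where `n` is least with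
`x n ≠ y n`, and `d(x,x) = 0`. -/
noncomputable def seqDist (x y : ℕ → ℕ) : ℝ :=
  if h : x = y then 0 else (2 : ℝ)⁻¹ ^ Nat.find (Function.ne_iff.mp h)

/-- Uniform continuity of a map between path spaces. -/
def IsUnifCont {T S : Set (List ℕ)} (Φ : pathSpace T → pathSpace S) : Prop :=
  ∀ ε : ℝ, 0 < ε → ∃ δ : ℝ, 0 < δ ∧ ∀ x y : pathSpace T,
    seqDist x.1 y.1 < δ → seqDist (Φ x).1 (Φ y).1 < ε
/-- Two path spaces are uniformly homeomorphic iff there is a bijection between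
them that is uniformly continuous in both directions. -/
def UnifHomeo (T S : Set (List ℕ)) : Prop :=
  ∃ Φ : pathSpace T ≃ pathSpace S, IsUnifCont (⇑Φ) ∧ IsUnifCont (⇑Φ.symm)

/-- The tree coded by an element of `2^(List ℕ)`. -/
def treeOf (f : List ℕ → Bool) : Set (List ℕ) := {s | f s = true}

namespace EllRed

/-- the point `p_{n,k,i}` -/
def pt (n k i : ℕ) : ℕ → ℕ := fun t => if t = 0 then Nat.pair n k else if t = k + 1 then i else 0

/-- size of cluster `(n,k)` -/
def Nsz (z : ℕ → ℕ) (n k : ℕ) : ℕ := Nat.pair n (k + z n) + 2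

/-- tree membership -/
def mem (z : ℕ → ℕ) (s : List ℕ) : Prop :=
  ∃ n k i, i < Nsz z n k ∧ ∀ j, j < s.length → s.getD j 0 = pt n k i j

noncomputable def theta (z : ℕ → ℕ) : List ℕ → Bool := fun s => if mem z s then true else false

lemma treeOf_theta (z : ℕ → ℕ) : treeOf (theta z) = {s | mem z s} := by
  ext s; by_cases h : mem z s <;> simp [treeOf, theta, h]

lemma pt_zero (n k i : ℕ) : pt n k i 0 = Nat.pair n k := by simp [pt]
lemma pt_succ (n k i : ℕ) : pt n k i (k + 1) = i := by simp [pt]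
lemma pt_other {t : ℕ} (n k i : ℕ) (h0 : t ≠ 0) (hk : t ≠ k + 1) : pt n k i t = 0 := by
  simp [pt, h0, hk]

lemma two_le_Nsz (z : ℕ → ℕ) (n k : ℕ) : 2 ≤ Nsz z n k := by simp [Nsz]

lemma getD_ofFn (f : ℕ → ℕ) {m j : ℕ} (h : j < m) :
    (List.ofFn fun t : Fin m => f t).getD j 0 = f j := by
  have hl : j < (List.ofFn fun t : Fin m => f t).length := by simpa using h
  rw [List.getD_eq_getElem _ _ hl, List.getElem_ofFn]

lemma mem_nil (z : ℕ → ℕ) : mem z [] :=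
  ⟨0, 0, 0, lt_of_lt_of_le (by norm_num) (two_le_Nsz z 0 0), by simp⟩

lemma pt_mem_pathSpace {z : ℕ → ℕ} {n k i : ℕ} (h : i < Nsz z n k) :
    pt n k i ∈ pathSpace (treeOf (theta z)) := by
  intro m
  rw [treeOf_theta]
  exact ⟨n, k, i, h, fun j hj => by
    rw [getD_ofFn _ (by simpa using hj)]⟩

lemma pathSpace_char {z : ℕ → ℕ} {q : ℕ → ℕ} :
    q ∈ pathSpace (treeOf (theta z)) ↔ ∃ n k i, i < Nsz z n k ∧ q = pt n k i := by
  constructor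
  · intro hq
    have hm : ∀ m, mem z (List.ofFn fun t : Fin m => q t) := by
      intro m; have := hq m; rwa [treeOf_theta] at this
    -- the first coordinate pins (n, k)
    have key : ∀ m, 0 < m → ∃ i, i < Nsz z (Nat.unpair (q 0)).1 (Nat.unpair (q 0)).2 ∧
        ∀ j, j < m → q j = pt (Nat.unpair (q 0)).1 (Nat.unpair (q 0)).2 i j := by
      intro m hm0
      obtain ⟨n, k, i, hi, hj⟩ := hm m
      have h0 : q 0 = Nat.pair n k := by
        have := hj 0 (by simpa using hm0)
        rwa [getD_ofFn q hm0] at this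
      have hn : (Nat.unpair (q 0)).1 = n := by rw [h0, Nat.unpair_pair]
      have hk : (Nat.unpair (q 0)).2 = k := by rw [h0, Nat.unpair_pair]
      refine ⟨i, by rw [hn, hk]; exact hi, fun j hjm => ?_⟩
      rw [hn, hk]
      have := hj j (by simpa using hjm)
      rwa [getD_ofFn q hjm] at this
    set n := (Nat.unpair (q 0)).1
    set k := (Nat.unpair (q 0)).2
    obtain ⟨i, hi, hji⟩ := key (k + 2) (by omega)
    have hqk : q (k + 1) = i := by
      have := hji (k + 1) (by omega); rwa [pt_succ] at this
    refine ⟨n, k, i, hi, funext fun t => ?_⟩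
    rcases eq_or_ne t 0 with rfl | ht0
    · have := hji 0 (by omega); simpa using this
    rcases eq_or_ne t (k + 1) with rfl | htk
    · rw [pt_succ]; exact hqk
    · obtain ⟨i', _, hji'⟩ := key (t + 1) (by omega)
      have := hji' t (by omega)
      rw [pt_other n k i' ht0 htk] at this
      rw [pt_other n k i ht0 htk, this]
  · rintro ⟨n, k, i, hi, rfl⟩
    exact pt_mem_pathSpace hi

/- seqDist lemmas -/
lemma seqDist_eq_pow {x y : ℕ → ℕ} (m : ℕ) (h1 : ∀ t, t < m → x t = y t) (h2 : x m ≠ y m) :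
    seqDist x y = (2 : ℝ)⁻¹ ^ m := by
  have hxy : x ≠ y := fun h => h2 (by rw [h])
  rw [seqDist, dif_neg hxy]
  congr 1
  rw [Nat.find_eq_iff]
  exact ⟨h2, fun j hj hne => hne (h1 j hj)⟩

lemma seqDist_self {x y : ℕ → ℕ} (h : x = y) : seqDist x y = 0 := by rw [seqDist, dif_pos h]

lemma seqDist_nonneg (x y : ℕ → ℕ) : 0 ≤ seqDist x y := by
  rw [seqDist]; split
  · exact le_refl 0
  · positivity

lemma dist_pt_same {n k i i' : ℕ} (h : i ≠ i') :
    seqDist (pt n k i) (pt n k i') = (2 : ℝ)⁻¹ ^ (k + 1) := by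
  refine seqDist_eq_pow (k + 1) (fun t ht => ?_) (by rw [pt_succ, pt_succ]; exact h)
  rcases eq_or_ne t 0 with rfl | ht0
  · rw [pt_zero, pt_zero]
  · rw [pt_other n k i ht0 (by omega), pt_other n k i' ht0 (by omega)]

lemma dist_pt_diff {n k i n' k' i' : ℕ} (h : (n, k) ≠ (n', k')) :
    seqDist (pt n k i) (pt n' k' i') = 1 := by
  have : seqDist (pt n k i) (pt n' k' i') = (2 : ℝ)⁻¹ ^ 0 := by
    refine seqDist_eq_pow 0 (fun t ht => absurd ht (by omega)) ?_
    rw [pt_zero, pt_zero]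
    intro hc
    exact h (by have := Nat.pair_eq_pair.mp hc; simp [this.1, this.2])
  simpa using this

lemma same_cluster_of_dist_lt_one {n k i n' k' i' : ℕ}
    (h : seqDist (pt n k i) (pt n' k' i') < 1) : n = n' ∧ k = k' := by
  by_contra hc
  have : (n, k) ≠ (n', k') := by
    intro he; apply hc; exact ⟨congrArg Prod.fst he, congrArg Prod.snd he⟩
  rw [dist_pt_diff this] at h
  exact absurd h (by norm_num)


/-- index type of the path space -/
def Idx (z : ℕ → ℕ) : Type := {p : ℕ × ℕ × ℕ // p.2.2 < Nsz z p.1 p.2.1}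

instance (z : ℕ → ℕ) : Countable (Idx z) := by unfold Idx; infer_instance

lemma pt_inj {n k i n' k' i' : ℕ} (h : pt n k i = pt n' k' i') : n = n' ∧ k = k' ∧ i = i' := by
  have h0 := congrFun h 0
  rw [pt_zero, pt_zero] at h0
  obtain ⟨hn, hk⟩ := Nat.pair_eq_pair.mp h0
  subst hn; subst hk
  have h1 := congrFun h (k + 1)
  rw [pt_succ, pt_succ] at h1
  exact ⟨rfl, rfl, h1⟩

noncomputable def pEquiv (z : ℕ → ℕ) : ↥(pathSpace (treeOf (theta z))) ≃ Idx z where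
  toFun q := ⟨((Nat.unpair (q.1 0)).1, (Nat.unpair (q.1 0)).2,
      q.1 ((Nat.unpair (q.1 0)).2 + 1)), by
    obtain ⟨n, k, i, hi, hq⟩ := pathSpace_char.mp q.2
    simp only [hq, pt_zero, Nat.unpair_pair, pt_succ]
    exact hi⟩
  invFun a := ⟨pt a.1.1 a.1.2.1 a.1.2.2, pt_mem_pathSpace a.2⟩
  left_inv q := by
    obtain ⟨n, k, i, hi, hq⟩ := pathSpace_char.mp q.2
    apply Subtype.ext
    simp only [hq, pt_zero, Nat.unpair_pair, pt_succ]
  right_inv a := by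
    apply Subtype.ext
    simp only [pt_zero, Nat.unpair_pair, pt_succ]

lemma pEquiv_spec {z : ℕ → ℕ} (q : ↥(pathSpace (treeOf (theta z)))) :
    q.1 = pt ((pEquiv z) q).1.1 ((pEquiv z) q).1.2.1 ((pEquiv z) q).1.2.2 := by
  exact (congrArg Subtype.val ((pEquiv z).left_inv q)).symm

lemma pEquiv_symm_val {z : ℕ → ℕ} (a : Idx z) :
    ((pEquiv z).symm a).1 = pt a.1.1 a.1.2.1 a.1.2.2 := rfl

section Construction

variable (z z' : ℕ → ℕ) (C : ℕ)

/-- matched part on the left: `k ≥ C+1` -/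
def PA : Idx z → Prop := fun a => C + 1 ≤ a.1.2.1

/-- matched part on the right -/
def PB : Idx z' → Prop := fun b => C + 1 + z b.1.1 ≤ b.1.2.1 + z' b.1.1

def matchEquiv (h1 : ∀ n, z n ≤ z' n + C) (h2 : ∀ n, z' n ≤ z n + C) :
    {a : Idx z // PA z C a} ≃ {b : Idx z' // PB z z' C b} where
  toFun a := ⟨⟨(a.1.1.1, a.1.1.2.1 + z a.1.1.1 - z' a.1.1.1, a.1.1.2.2), by
      have hC := h2 a.1.1.1
      have hk : C + 1 ≤ a.1.1.2.1 := a.2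
      have hval := a.1.2
      simp only [Nsz] at hval ⊢
      have : a.1.1.2.1 + z a.1.1.1 - z' a.1.1.1 + z' a.1.1.1
          = a.1.1.2.1 + z a.1.1.1 := by omega
      rw [this]; exact hval⟩, by
    have hC := h2 a.1.1.1
    have hk : C + 1 ≤ a.1.1.2.1 := a.2
    simp only [PB]; omega⟩
  invFun b := ⟨⟨(b.1.1.1, b.1.1.2.1 + z' b.1.1.1 - z b.1.1.1, b.1.1.2.2), by
      have hb : C + 1 + z b.1.1.1 ≤ b.1.1.2.1 + z' b.1.1.1 := b.2
      have hval := b.1.2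
      simp only [Nsz] at hval ⊢
      have : b.1.1.2.1 + z' b.1.1.1 - z b.1.1.1 + z b.1.1.1
          = b.1.1.2.1 + z' b.1.1.1 := by omega
      rw [this]; exact hval⟩, by
    have hb : C + 1 + z b.1.1.1 ≤ b.1.1.2.1 + z' b.1.1.1 := b.2
    simp only [PA]; omega⟩
  left_inv a := by
    have hC := h2 a.1.1.1
    have hk : C + 1 ≤ a.1.1.2.1 := a.2
    apply Subtype.ext; apply Subtype.ext
    show (_, _, _) = a.1.1
    have : a.1.1.2.1 + z a.1.1.1 - z' a.1.1.1 + z' a.1.1.1 - z a.1.1.1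
        = a.1.1.2.1 := by omega
    rw [this]
  right_inv b := by
    have hb : C + 1 + z b.1.1.1 ≤ b.1.1.2.1 + z' b.1.1.1 := b.2
    apply Subtype.ext; apply Subtype.ext
    show (_, _, _) = b.1.1
    have : b.1.1.2.1 + z' b.1.1.1 - z b.1.1.1 + z b.1.1.1 - z' b.1.1.1
        = b.1.1.2.1 := by omega
    rw [this]


lemma hpow_lt {a b : ℕ} : (2:ℝ)⁻¹ ^ a < (2:ℝ)⁻¹ ^ b ↔ b < a :=
  pow_lt_pow_iff_right_of_lt_one₀ (by norm_num) (by norm_num)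

lemma infinite_compl_PA : Infinite {a : Idx z // ¬ PA z C a} := by
  refine Infinite.of_injective (fun n : ℕ =>
    ⟨⟨(n, 0, 0), lt_of_lt_of_le (by norm_num) (two_le_Nsz z n 0)⟩, by simp [PA]⟩) ?_
  intro m m' hmm
  have : (m, (0:ℕ), (0:ℕ)) = (m', 0, 0) := congrArg (fun w => w.1.1) hmm
  exact (Prod.mk.injEq _ _ _ _).mp this |>.1

lemma infinite_compl_PB (h2 : ∀ n, z' n ≤ z n + C) : Infinite {b : Idx z' // ¬ PB z z' C b} := by
  refine Infinite.of_injective (fun n : ℕ =>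
    ⟨⟨(n, 0, 0), lt_of_lt_of_le (by norm_num) (two_le_Nsz z' n 0)⟩, by
      have := h2 n; simp only [PB]; omega⟩) ?_
  intro m m' hmm
  have : (m, (0:ℕ), (0:ℕ)) = (m', 0, 0) := congrArg (fun w => w.1.1) hmm
  exact (Prod.mk.injEq _ _ _ _).mp this |>.1

theorem bounded_to_UH (h1 : ∀ n, z n ≤ z' n + C) (h2 : ∀ n, z' n ≤ z n + C) :
    UnifHomeo (treeOf (theta z)) (treeOf (theta z')) := by
  classical
  haveI := infinite_compl_PA z C
  haveI := infinite_compl_PB z z' C h2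
  obtain ⟨dA⟩ := nonempty_denumerable {a : Idx z // ¬ PA z C a}
  obtain ⟨dB⟩ := nonempty_denumerable {b : Idx z' // ¬ PB z z' C b}
  let rem : {a : Idx z // ¬ PA z C a} ≃ {b : Idx z' // ¬ PB z z' C b} :=
    (@Denumerable.eqv _ dA).trans (@Denumerable.eqv _ dB).symm
  let mE := matchEquiv z z' C h1 h2
  let E : Idx z ≃ Idx z' :=
    (Equiv.sumCompl (PA z C)).symm.trans ((Equiv.sumCongr mE rem).trans (Equiv.sumCompl (PB z z' C)))
  have hEpos : ∀ (a : Idx z) (ha : PA z C a), E a = (mE ⟨a, ha⟩).1 := by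
    intro a ha
    show (Equiv.sumCompl (PB z z' C)) ((Equiv.sumCongr mE rem) ((Equiv.sumCompl (PA z C)).symm a)) = _
    rw [Equiv.sumCompl_symm_apply_of_pos ha]
    rfl
  have hEsymm : ∀ (b : Idx z') (hb : PB z z' C b), E.symm b = (mE.symm ⟨b, hb⟩).1 := by
    intro b hb
    rw [Equiv.symm_apply_eq]
    have hx : PA z C ((mE.symm ⟨b, hb⟩).1) := (mE.symm ⟨b, hb⟩).2
    rw [hEpos _ hx]
    have : (⟨(mE.symm ⟨b, hb⟩).1, hx⟩ : {a : Idx z // PA z C a}) = mE.symm ⟨b, hb⟩ :=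
      Subtype.ext rfl
    rw [this, Equiv.apply_symm_apply]
  let Φ : ↥(pathSpace (treeOf (theta z))) ≃ ↥(pathSpace (treeOf (theta z'))) :=
    (pEquiv z).trans (E.trans (pEquiv z').symm)
  refine ⟨Φ, ?_, ?_⟩
  · intro ε hε
    obtain ⟨t, ht⟩ := exists_pow_lt_of_lt_one hε (by norm_num : (2:ℝ)⁻¹ < 1)
    set M := max (C + 1) (t + C) with hM
    refine ⟨(2:ℝ)⁻¹ ^ (M + 1), by positivity, ?_⟩
    intro a b hd
    by_cases hab : a = b
    · rw [hab, seqDist_self rfl]; exact hε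
    set A := pEquiv z a with hA
    set B := pEquiv z b with hB
    have hAB : A ≠ B := fun h => hab ((pEquiv z).injective h)
    have ha1 : a.1 = pt A.1.1 A.1.2.1 A.1.2.2 := pEquiv_spec a
    have hb1 : b.1 = pt B.1.1 B.1.2.1 B.1.2.2 := pEquiv_spec b
    rw [ha1, hb1] at hd
    have hdlt1 : seqDist (pt A.1.1 A.1.2.1 A.1.2.2) (pt B.1.1 B.1.2.1 B.1.2.2) < 1 := by
      refine lt_trans hd ?_
      have : (2:ℝ)⁻¹ ^ (M+1) < 2⁻¹ ^ 0 := hpow_lt.mpr (by omega)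
      simpa using this
    obtain ⟨hn, hk⟩ := same_cluster_of_dist_lt_one hdlt1
    have hii : A.1.2.2 ≠ B.1.2.2 := by
      intro hi
      apply hAB
      apply Subtype.ext
      exact Prod.ext hn (Prod.ext hk hi)
    have e1 : z B.1.1 = z A.1.1 := by rw [hn]
    have e2 : z' B.1.1 = z' A.1.1 := by rw [hn]
    have e3 : B.1.2.1 = A.1.2.1 := hk.symm
    have hptB : pt B.1.1 B.1.2.1 B.1.2.2 = pt A.1.1 A.1.2.1 B.1.2.2 := by rw [hn, hk]
    rw [hptB, dist_pt_same hii, hpow_lt] at hd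
    have hPA : PA z C A := by simp only [PA]; omega
    have hPB : PA z C B := by simp only [PA]; omega
    have hΦa : (Φ a).1 = pt A.1.1 (A.1.2.1 + z A.1.1 - z' A.1.1) A.1.2.2 := by
      show ((pEquiv z').symm (E A)).1 = _
      rw [hEpos A hPA, pEquiv_symm_val]
      rfl
    have hΦb : (Φ b).1 = pt B.1.1 (B.1.2.1 + z B.1.1 - z' B.1.1) B.1.2.2 := by
      show ((pEquiv z').symm (E B)).1 = _
      rw [hEpos B hPB, pEquiv_symm_val]
      rfl
    have hmid : B.1.2.1 + z B.1.1 - z' B.1.1 = A.1.2.1 + z A.1.1 - z' A.1.1 := by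
      rw [hn, hk]
    have hfst : B.1.1 = A.1.1 := hn.symm
    rw [hΦa, hΦb, hmid, hfst, dist_pt_same hii]
    refine lt_trans (hpow_lt.mpr ?_) ht
    have hz := h2 A.1.1
    have hz2 := h1 A.1.1
    omega
  · intro ε hε
    obtain ⟨t, ht⟩ := exists_pow_lt_of_lt_one hε (by norm_num : (2:ℝ)⁻¹ < 1)
    set M := max (2 * C + 1) (t + C) with hM
    refine ⟨(2:ℝ)⁻¹ ^ (M + 1), by positivity, ?_⟩
    intro a b hd
    by_cases hab : a = b
    · rw [hab, seqDist_self rfl]; exact hε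
    set A := pEquiv z' a with hA
    set B := pEquiv z' b with hB
    have hAB : A ≠ B := fun h => hab ((pEquiv z').injective h)
    have ha1 : a.1 = pt A.1.1 A.1.2.1 A.1.2.2 := pEquiv_spec a
    have hb1 : b.1 = pt B.1.1 B.1.2.1 B.1.2.2 := pEquiv_spec b
    rw [ha1, hb1] at hd
    have hdlt1 : seqDist (pt A.1.1 A.1.2.1 A.1.2.2) (pt B.1.1 B.1.2.1 B.1.2.2) < 1 := by
      refine lt_trans hd ?_
      have : (2:ℝ)⁻¹ ^ (M+1) < 2⁻¹ ^ 0 := hpow_lt.mpr (by omega)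
      simpa using this
    obtain ⟨hn, hk⟩ := same_cluster_of_dist_lt_one hdlt1
    have hii : A.1.2.2 ≠ B.1.2.2 := by
      intro hi
      apply hAB
      apply Subtype.ext
      exact Prod.ext hn (Prod.ext hk hi)
    have e1 : z B.1.1 = z A.1.1 := by rw [hn]
    have e2 : z' B.1.1 = z' A.1.1 := by rw [hn]
    have e3 : B.1.2.1 = A.1.2.1 := hk.symm
    have hptB : pt B.1.1 B.1.2.1 B.1.2.2 = pt A.1.1 A.1.2.1 B.1.2.2 := by rw [hn, hk]
    rw [hptB, dist_pt_same hii, hpow_lt] at hd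
    have hPA : PB z z' C A := by
      have := h1 A.1.1; simp only [PB]; omega
    have hPB : PB z z' C B := by
      have := h1 A.1.1; simp only [PB]; omega
    have hΦa : (Φ.symm a).1 = pt A.1.1 (A.1.2.1 + z' A.1.1 - z A.1.1) A.1.2.2 := by
      show ((pEquiv z).symm (E.symm A)).1 = _
      rw [hEsymm A hPA, pEquiv_symm_val]
      rfl
    have hΦb : (Φ.symm b).1 = pt B.1.1 (B.1.2.1 + z' B.1.1 - z B.1.1) B.1.2.2 := by
      show ((pEquiv z).symm (E.symm B)).1 = _
      rw [hEsymm B hPB, pEquiv_symm_val]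
      rfl
    have hmid : B.1.2.1 + z' B.1.1 - z B.1.1 = A.1.2.1 + z' A.1.1 - z A.1.1 := by
      rw [hn, hk]
    have hfst : B.1.1 = A.1.1 := hn.symm
    rw [hΦa, hΦb, hmid, hfst, dist_pt_same hii]
    refine lt_trans (hpow_lt.mpr ?_) ht
    have hz := h1 A.1.1
    have hz2 := h2 A.1.1
    omega

end Construction

lemma hpow_le {a b : ℕ} (h : a ≤ b) : (2:ℝ)⁻¹ ^ b ≤ (2:ℝ)⁻¹ ^ a :=
  pow_le_pow_of_le_one (by norm_num) (by norm_num) h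

lemma pEquiv_pt_val {z : ℕ → ℕ} {n k i : ℕ} (hi : i < Nsz z n k) :
    ((pEquiv z) ⟨pt n k i, pt_mem_pathSpace hi⟩).1 = (n, k, i) := by
  show (((Nat.unpair (pt n k i 0)).1, (Nat.unpair (pt n k i 0)).2,
    pt n k i ((Nat.unpair (pt n k i 0)).2 + 1)) : ℕ × ℕ × ℕ) = (n, k, i)
  simp only [pEquiv, Equiv.coe_fn_mk, pt_zero, Nat.unpair_pair, pt_succ]

lemma pt_ne_of_idx_ne {n k i i' : ℕ} (h : i ≠ i') : pt n k i ≠ pt n k i' := by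
  intro hc
  have := congrFun hc (k + 1)
  rw [pt_succ, pt_succ] at this
  exact h this

theorem UH_to_bounded (z z' : ℕ → ℕ)
    (h : UnifHomeo (treeOf (theta z)) (treeOf (theta z'))) :
    ∃ C : ℕ, ∀ n, z' n ≤ z n + C := by
  classical
  obtain ⟨Φ, hΦ, hΨ⟩ := h
  obtain ⟨δ₁', hδ₁'pos, hδ₁'⟩ := hΨ 1 one_pos
  obtain ⟨t₀, ht₀⟩ := exists_pow_lt_of_lt_one hδ₁'pos (by norm_num : (2:ℝ)⁻¹ < 1)
  set k0 : ℕ := t₀ + 1 with hk0def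
  obtain ⟨δ₂, hδ₂pos, hδ₂⟩ := hΦ ((2:ℝ)⁻¹ ^ (k0 + 1)) (by positivity)
  obtain ⟨δ₁, hδ₁pos, hδ₁⟩ := hΦ 1 one_pos
  obtain ⟨t₁, ht₁⟩ := exists_pow_lt_of_lt_one (lt_min_iff.mpr ⟨hδ₁pos, hδ₂pos⟩)
    (by norm_num : (2:ℝ)⁻¹ < 1)
  set K : ℕ := t₁ + 1 with hKdef
  refine ⟨K, fun n => ?_⟩
  set N0 := Nsz z n K with hN0
  have h0N : 0 < N0 := lt_of_lt_of_le (by norm_num) (two_le_Nsz z n K)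
  have h1N : 1 < N0 := lt_of_lt_of_le (by norm_num) (two_le_Nsz z n K)
  -- the basic small distance in the domain
  have hdom : ∀ i i' : ℕ, i ≠ i' →
      seqDist (pt n K i) (pt n K i') = (2:ℝ)⁻¹ ^ (K + 1) := fun i i' hii => dist_pt_same hii
  have hdomδ₁ : (2:ℝ)⁻¹ ^ (K + 1) < δ₁ :=
    lt_of_le_of_lt (hpow_le (by omega)) (lt_of_lt_of_le ht₁ (min_le_left _ _))
  have hdomδ₂ : (2:ℝ)⁻¹ ^ (K + 1) < δ₂ :=
    lt_of_le_of_lt (hpow_le (by omega)) (lt_of_lt_of_le ht₁ (min_le_right _ _))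
  -- image indices
  let A : ∀ i, i < N0 → ↥(pathSpace (treeOf (theta z))) := fun i hi =>
    ⟨pt n K i, pt_mem_pathSpace hi⟩
  let F : ∀ i, i < N0 → Idx z' := fun i hi => pEquiv z' (Φ (A i hi))
  have hFval : ∀ i (hi : i < N0),
      (Φ (A i hi)).1 = pt (F i hi).1.1 (F i hi).1.2.1 (F i hi).1.2.2 := fun i hi =>
    pEquiv_spec _
  have hAne : ∀ i i' (hi : i < N0) (hi' : i' < N0), i ≠ i' → A i hi ≠ A i' hi' := by
    intro i i' hi hi' hii hc
    exact pt_ne_of_idx_ne hii (congrArg Subtype.val hc)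
  have hFne : ∀ i i' (hi : i < N0) (hi' : i' < N0), i ≠ i' → F i hi ≠ F i' hi' := by
    intro i i' hi hi' hii hc
    exact hAne i i' hi hi' hii (Φ.injective ((pEquiv z').injective hc))
  set n2 := (F 0 h0N).1.1 with hn2def
  set k2 := (F 0 h0N).1.2.1 with hk2def
  set i20 := (F 0 h0N).1.2.2 with hi20def
  -- all images lie in the cluster (n2, k2)
  have hsame : ∀ i (hi : i < N0), (F i hi).1.1 = n2 ∧ (F i hi).1.2.1 = k2 := by
    intro i hi
    rcases eq_or_ne i 0 with rfl | hi0
    · exact ⟨rfl, rfl⟩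
    · have hdd : seqDist (A i hi).1 (A 0 h0N).1 < δ₁ := by
        show seqDist (pt n K i) (pt n K 0) < δ₁
        rw [hdom i 0 hi0]; exact hdomδ₁
      have := hδ₁ _ _ hdd
      rw [hFval i hi, hFval 0 h0N] at this
      exact same_cluster_of_dist_lt_one this
  -- the image cluster scale is fine: k0 < k2
  have hk2 : k0 + 1 ≤ k2 := by
    have hdd : seqDist (A 1 h1N).1 (A 0 h0N).1 < δ₂ := by
      show seqDist (pt n K 1) (pt n K 0) < δ₂
      rw [hdom 1 0 one_ne_zero]; exact hdomδ₂
    have hlt := hδ₂ _ _ hdd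
    rw [hFval 1 h1N, hFval 0 h0N] at hlt
    have hne : (F 1 h1N).1.2.2 ≠ i20 := by
      intro hc
      refine hFne 1 0 h1N h0N one_ne_zero ?_
      apply Subtype.ext
      exact Prod.ext (hsame 1 h1N).1 (Prod.ext (hsame 1 h1N).2 hc)
    rw [(hsame 1 h1N).1, (hsame 1 h1N).2] at hlt
    rw [dist_pt_same hne, hpow_lt] at hlt
    omega
  -- first injection : N0 ≤ Nsz z' n2 k2
  have card1 : N0 ≤ Nsz z' n2 k2 := by
    have hinj : Function.Injective (fun i : Fin N0 =>
        (⟨(F i.1 i.2).1.2.2, by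
          have h2 := (F i.1 i.2).2
          rwa [(hsame i.1 i.2).1, (hsame i.1 i.2).2] at h2⟩ : Fin (Nsz z' n2 k2))) := by
      intro i j hc
      simp only [Fin.mk.injEq] at hc
      by_contra hij
      have hij' : i.1 ≠ j.1 := fun hh => hij (Fin.ext hh)
      refine hFne i.1 j.1 i.2 j.2 hij' ?_
      apply Subtype.ext
      exact Prod.ext ((hsame i.1 i.2).1.trans (hsame j.1 j.2).1.symm)
        (Prod.ext ((hsame i.1 i.2).2.trans (hsame j.1 j.2).2.symm) hc)
    simpa using Fintype.card_le_of_injective _ hinj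
  -- points of the image cluster pull back into cluster (n, K)
  have hi20lt : i20 < Nsz z' n2 k2 := by
    have h2 := (F 0 h0N).2
    exact h2
  have hΦA0 : (Φ (A 0 h0N)).1 = pt n2 k2 i20 := hFval 0 h0N
  have hsymm0 : Φ.symm ⟨pt n2 k2 i20, pt_mem_pathSpace hi20lt⟩ = A 0 h0N := by
    have : (⟨pt n2 k2 i20, pt_mem_pathSpace hi20lt⟩ : ↥(pathSpace (treeOf (theta z'))))
        = Φ (A 0 h0N) := Subtype.ext hΦA0.symm
    rw [this, Equiv.symm_apply_apply]
  let G : ∀ i', i' < Nsz z' n2 k2 → Idx z := fun i' hi' =>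
    pEquiv z (Φ.symm ⟨pt n2 k2 i', pt_mem_pathSpace hi'⟩)
  have hGval : ∀ i' (hi' : i' < Nsz z' n2 k2),
      (Φ.symm ⟨pt n2 k2 i', pt_mem_pathSpace hi'⟩).1
        = pt (G i' hi').1.1 (G i' hi').1.2.1 (G i' hi').1.2.2 := fun i' hi' => pEquiv_spec _
  have hGsame : ∀ i' (hi' : i' < Nsz z' n2 k2), (G i' hi').1.1 = n ∧ (G i' hi').1.2.1 = K := by
    intro i' hi'
    have hdd : seqDist (pt n2 k2 i') (pt n2 k2 i20) < δ₁' := by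
      rcases eq_or_ne i' i20 with rfl | hne
      · rw [seqDist_self rfl]; exact hδ₁'pos
      · rw [dist_pt_same hne]
        exact lt_of_le_of_lt (hpow_le (by omega)) ht₀
    have := hδ₁' ⟨pt n2 k2 i', pt_mem_pathSpace hi'⟩ ⟨pt n2 k2 i20, pt_mem_pathSpace hi20lt⟩ hdd
    rw [hsymm0] at this
    rw [hGval i' hi'] at this
    have hA0 : (A 0 h0N).1 = pt n K 0 := rfl
    rw [hA0] at this
    obtain ⟨e1, e2⟩ := same_cluster_of_dist_lt_one this
    exact ⟨e1, e2⟩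
  have hGne : ∀ i' j' (hi' : i' < Nsz z' n2 k2) (hj' : j' < Nsz z' n2 k2), i' ≠ j' →
      G i' hi' ≠ G j' hj' := by
    intro i' j' hi' hj' hne hc
    have := Φ.symm.injective ((pEquiv z).injective hc)
    exact pt_ne_of_idx_ne hne (congrArg Subtype.val this)
  have card2 : Nsz z' n2 k2 ≤ N0 := by
    have hinj : Function.Injective (fun i' : Fin (Nsz z' n2 k2) =>
        (⟨(G i'.1 i'.2).1.2.2, by
          have h2 := (G i'.1 i'.2).2
          rwa [(hGsame i'.1 i'.2).1, (hGsame i'.1 i'.2).2] at h2⟩ : Fin N0)) := by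
      intro i j hc
      simp only [Fin.mk.injEq] at hc
      by_contra hij
      have hij' : i.1 ≠ j.1 := fun hh => hij (Fin.ext hh)
      refine hGne i.1 j.1 i.2 j.2 hij' ?_
      apply Subtype.ext
      exact Prod.ext ((hGsame i.1 i.2).1.trans (hGsame j.1 j.2).1.symm)
        (Prod.ext ((hGsame i.1 i.2).2.trans (hGsame j.1 j.2).2.symm) hc)
    simpa using Fintype.card_le_of_injective _ hinj
  have hcard : Nsz z n K = Nsz z' n2 k2 := le_antisymm card1 card2
  simp only [Nsz] at hcard
  have hpair := Nat.pair_eq_pair.mp (by omega : Nat.pair n (K + z n) = Nat.pair n2 (k2 + z' n2))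
  obtain ⟨he1, he2⟩ := hpair
  have h3 : z' n = z' n2 := by rw [he1]
  omega


/-- pruned -/
lemma pruned (z : ℕ → ℕ) : IsPrunedTree (treeOf (theta z)) := by
  rw [treeOf_theta]
  refine ⟨⟨[], mem_nil z⟩, ?_, ?_⟩
  · rintro s ⟨n, k, i, hi, hs⟩ t ht
    refine ⟨n, k, i, hi, fun j hj => ?_⟩
    have hj' : j < s.length := lt_of_lt_of_le hj ht.length_le
    have hgs := hs j hj'
    rw [List.getD_eq_getElem _ _ hj'] at hgs
    rw [List.getD_eq_getElem _ _ hj, ht.getElem hj]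
    exact hgs
  · rintro s ⟨n, k, i, hi, hs⟩
    refine ⟨s ++ [pt n k i s.length], ⟨n, k, i, hi, fun j hj => ?_⟩, List.prefix_append _ _, ?_⟩
    · rcases lt_or_ge j s.length with hjs | hjs
      · have hj2 : j < (s ++ [pt n k i s.length]).length := by simp; omega
        rw [List.getD_eq_getElem _ _ hj2, List.getElem_append_left hjs,
          ← List.getD_eq_getElem _ _ hjs]
        exact hs j hjs
      · have hj3 : j = s.length := by simp at hj; omega
        rw [hj3]
        have hj2 : s.length < (s ++ [pt n k i s.length]).length := by simp
        rw [List.getD_eq_getElem _ _ hj2]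
        simp
    · intro hc
      simpa using congrArg List.length hc

/-- the natural-valued encoding of a real sequence -/
noncomputable def zfun (x : ℕ → ℝ) (m : ℕ) : ℕ :=
  if m % 2 = 0 then (⌈x (m / 2)⌉).toNat else (-⌈x (m / 2)⌉).toNat

lemma zfun_even (x : ℕ → ℝ) (n : ℕ) : zfun x (2 * n) = (⌈x n⌉).toNat := by
  have e1 : (2 * n) % 2 = 0 := by omega
  have e2 : 2 * n / 2 = n := by omega
  simp [zfun, e1, e2]

lemma zfun_odd (x : ℕ → ℝ) (n : ℕ) : zfun x (2 * n + 1) = (-⌈x n⌉).toNat := by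
  have e1 : (2 * n + 1) % 2 = 1 := by omega
  have e2 : (2 * n + 1) / 2 = n := by omega
  simp [zfun, e1, e2]

lemma ell_to_bounded {x y : ℕ → ℝ} (h : EllInfty x y) :
    ∃ C : ℕ, (∀ m, zfun x m ≤ zfun y m + C) ∧ (∀ m, zfun y m ≤ zfun x m + C) := by
  obtain ⟨M, hM⟩ := h
  have hc : ∀ n, ⌈x n⌉ ≤ ⌈y n⌉ + ⌈M⌉ ∧ ⌈y n⌉ ≤ ⌈x n⌉ + ⌈M⌉ := by
    intro n
    obtain ⟨ha, hb⟩ := abs_sub_lt_iff.mp (hM n)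
    constructor
    · have h1 : x n ≤ y n + M := by linarith
      calc ⌈x n⌉ ≤ ⌈y n + M⌉ := Int.ceil_le_ceil h1
        _ ≤ ⌈y n⌉ + ⌈M⌉ := Int.ceil_add_le _ _
    · have h1 : y n ≤ x n + M := by linarith
      calc ⌈y n⌉ ≤ ⌈x n + M⌉ := Int.ceil_le_ceil h1
        _ ≤ ⌈x n⌉ + ⌈M⌉ := Int.ceil_add_le _ _
  refine ⟨(⌈M⌉).toNat, fun m => ?_, fun m => ?_⟩ <;>
  · obtain ⟨h1, h2⟩ := hc (m / 2)
    unfold zfun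
    split <;> omega

lemma bounded_to_ell {x y : ℕ → ℝ} (C : ℕ)
    (h1 : ∀ m, zfun x m ≤ zfun y m + C) (h2 : ∀ m, zfun y m ≤ zfun x m + C) :
    EllInfty x y := by
  refine ⟨2 * C + 2, fun n => ?_⟩
  have e1 := h1 (2 * n); have e2 := h2 (2 * n)
  have e3 := h1 (2 * n + 1); have e4 := h2 (2 * n + 1)
  rw [zfun_even, zfun_even] at e1 e2
  rw [zfun_odd, zfun_odd] at e3 e4
  have hint : (⌈x n⌉ - ⌈y n⌉ : ℤ) ≤ 2 * C ∧ (⌈y n⌉ - ⌈x n⌉ : ℤ) ≤ 2 * C := by omega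
  have hcx : ((⌈x n⌉ : ℝ) - ⌈y n⌉) ≤ 2 * C := by exact_mod_cast hint.1
  have hcy : ((⌈y n⌉ : ℝ) - ⌈x n⌉) ≤ 2 * C := by exact_mod_cast hint.2
  have lx := Int.le_ceil (x n)
  have ly := Int.le_ceil (y n)
  have ux := Int.ceil_lt_add_one (x n)
  have uy := Int.ceil_lt_add_one (y n)
  rw [abs_sub_lt_iff]
  constructor <;> linarith

lemma mem_congr_aux {s : List ℕ} {z z' : ℕ → ℕ}
    (hzz : z ((Nat.unpair (s.getD 0 0)).1) = z' ((Nat.unpair (s.getD 0 0)).1))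
    (h : mem z s) : mem z' s := by
  rcases s with _ | ⟨c, r⟩
  · exact mem_nil z'
  · obtain ⟨n, k, i, hi, hj⟩ := h
    have h0 : c = Nat.pair n k := by
      have := hj 0 (by simp)
      simpa [pt_zero] using this
    have hn : (Nat.unpair ((c :: r).getD 0 0)).1 = n := by
      simp [h0, Nat.unpair_pair]
    refine ⟨n, k, i, ?_, hj⟩
    rw [hn] at hzz
    simpa [Nsz, ← hzz] using hi

lemma measurable_theta : Measurable (fun x : ℕ → ℝ => theta (zfun x)) := by
  apply measurable_pi_lambda
  intro s
  set n₀ := (Nat.unpair (s.getD 0 0)).1 with hn₀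
  have hre : (fun x : ℕ → ℝ => theta (zfun x) s)
      = (fun v : ℕ => theta (fun _ => v) s) ∘ (fun x : ℕ → ℝ => zfun x n₀) := by
    funext x
    simp only [Function.comp_apply]
    have hiff : mem (zfun x) s ↔ mem (fun _ => zfun x n₀) s :=
      ⟨fun h => mem_congr_aux (z := zfun x) (z' := fun _ => zfun x n₀) rfl h,
       fun h => mem_congr_aux (z := fun _ => zfun x n₀) (z' := zfun x) rfl h⟩
    unfold theta
    by_cases h : mem (zfun x) s
    · rw [if_pos h, if_pos (hiff.mp h)]
    · rw [if_neg h, if_neg (fun hq => h (hiff.mpr hq))]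
  rw [hre]
  apply Measurable.comp
  · exact measurable_from_top
  · unfold zfun
    by_cases hp : n₀ % 2 = 0
    · simp only [hp, if_true]
      have hin : Measurable fun x : ℕ → ℝ => ⌈x (n₀ / 2)⌉ := (measurable_pi_apply _).ceil
      exact Measurable.comp (measurable_from_top (f := Int.toNat)) hin
    · simp only [hp, if_false]
      have hin : Measurable fun x : ℕ → ℝ => -⌈x (n₀ / 2)⌉ :=
        ((measurable_pi_apply _).ceil).neg
      exact Measurable.comp (measurable_from_top (f := Int.toNat)) hin

end EllRed

/-- `ℓ∞` is Borel reducible to uniform homeomorphism of path spaces of pruned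
trees. -/
theorem ellInfty_reducible_unifHomeo :
    ∃ Θ : (ℕ → ℝ) → (List ℕ → Bool), Measurable Θ ∧
      (∀ x : ℕ → ℝ, IsPrunedTree (treeOf (Θ x))) ∧
      ∀ x y : ℕ → ℝ,
        EllInfty x y ↔ UnifHomeo (treeOf (Θ x)) (treeOf (Θ y)) := by
  refine ⟨fun x => EllRed.theta (EllRed.zfun x), EllRed.measurable_theta,
    fun x => EllRed.pruned _, fun x y => ?_⟩
  constructor
  · intro h
    obtain ⟨C, h1, h2⟩ := EllRed.ell_to_bounded h
    exact EllRed.bounded_to_UH (EllRed.zfun x) (EllRed.zfun y) C h1 h2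
  · intro h
    obtain ⟨C1, hC1⟩ := EllRed.UH_to_bounded _ _ h
    have h' : UnifHomeo (treeOf (EllRed.theta (EllRed.zfun y)))
        (treeOf (EllRed.theta (EllRed.zfun x))) := by
      obtain ⟨Φ, hΦ, hΨ⟩ := h
      exact ⟨Φ.symm, hΨ, by simpa using hΦ⟩
    obtain ⟨C2, hC2⟩ := EllRed.UH_to_bounded _ _ h'
    refine EllRed.bounded_to_ell (max C1 C2) (fun m => ?_) (fun m => ?_)
    · have := hC2 m; omega
    · have := hC1 m; omega
end

section
/- Fix an odd prime p and a set X. Suppose c, d ∈ L(X) commute: [c,d] = 1. Let c̄, d̄ denote the images of c, d in the central quotient L(X)/Z(L(X)). Then either there exists v ∈ X such that the subgroup generated by {c̄, d̄} equals the subgroup generated by {ā_v, b̄_v} (where ā_v, b̄_v are the images of a_v, b_v), or the subgroup generated by {c̄, d̄} is cyclic (generated by a single element). -/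
open scoped commutatorElement

/-- The relators defining `L(X)`: `p`-th powers, triple commutators (making the
group nilpotent of class ≤ 2), and the commutators `[a_v, b_v]`. -/
def LRelators (p : ℕ) (X : Type*) : Set (FreeGroup (X ⊕ X)) :=
  {w | ∃ u : FreeGroup (X ⊕ X), w = u ^ p} ∪
    {w | ∃ u v t : FreeGroup (X ⊕ X), w = ⁅⁅u, v⁆, t⁆} ∪
    {w | ∃ v : X, w = ⁅FreeGroup.of (Sum.inl v : X ⊕ X), FreeGroup.of (Sum.inr v : X ⊕ X)⁆}

/-- Mekler's group `L(X)`: the free 2-nilpotent group of exponent `p` on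
generators `a_v, b_v` (`v ∈ X`), modulo the relations `[a_v, b_v] = 1`. -/
def LGroup (p : ℕ) (X : Type*) : Type _ :=
  FreeGroup (X ⊕ X) ⧸ Subgroup.normalClosure (LRelators p X)

instance (p : ℕ) (X : Type*) : Group (LGroup p X) :=
  inferInstanceAs (Group (FreeGroup (X ⊕ X) ⧸ Subgroup.normalClosure (LRelators p X)))

/-- The generator `a_v` of `L(X)`. -/
def aGen (p : ℕ) {X : Type*} (v : X) : LGroup p X :=
  QuotientGroup.mk (FreeGroup.of (Sum.inl v))

/-- The generator `b_v` of `L(X)`. -/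
def bGen (p : ℕ) {X : Type*} (v : X) : LGroup p X :=
  QuotientGroup.mk (FreeGroup.of (Sum.inr v))

/-- The epimorphism `q̂ : L(X) → L(Y)` induced by a map `q : X → Y`, sending
`a_v ↦ a_{q v}` and `b_v ↦ b_{q v}`. -/
def inducedHom (p : ℕ) {X Y : Type*} (q : X → Y) : LGroup p X →* LGroup p Y :=
  QuotientGroup.lift _
    ((QuotientGroup.mk' _).comp (FreeGroup.map (Sum.map q q)))
    (by
      have hnorm : ((Subgroup.normalClosure (LRelators p Y)).comap
          (FreeGroup.map (Sum.map q q))).Normal :=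
        Subgroup.Normal.comap Subgroup.normalClosure_normal _
      have hle : Subgroup.normalClosure (LRelators p X) ≤
          (Subgroup.normalClosure (LRelators p Y)).comap
            (FreeGroup.map (Sum.map q q)) := by
        apply Subgroup.normalClosure_le_normal
        intro w hw
        simp only [LRelators, Set.mem_union, Set.mem_setOf_eq] at hw
        rcases hw with ((⟨u, rfl⟩ | ⟨u, v, t, rfl⟩) | ⟨v, rfl⟩)
        · refine Subgroup.mem_comap.mpr (Subgroup.subset_normalClosure ?_)
          exact Or.inl (Or.inl ⟨FreeGroup.map (Sum.map q q) u, by rw [map_pow]⟩)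
        · refine Subgroup.mem_comap.mpr (Subgroup.subset_normalClosure ?_)
          exact Or.inl (Or.inr ⟨_, _, _, by
            rw [map_commutatorElement, map_commutatorElement]⟩)
        · refine Subgroup.mem_comap.mpr (Subgroup.subset_normalClosure ?_)
          refine Or.inr ⟨q v, ?_⟩
          rw [map_commutatorElement, FreeGroup.map.of, FreeGroup.map.of]
          rfl
      intro w hw
      have hmem : FreeGroup.map (Sum.map q q) w ∈
          Subgroup.normalClosure (LRelators p Y) :=
        Subgroup.mem_comap.mp (hle hw)
      show QuotientGroup.mk' _ (FreeGroup.map (Sum.map q q) w) = 1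
      rw [QuotientGroup.mk'_apply]
      exact (QuotientGroup.eq_one_iff _).mpr hmem)


/-- The central quotient `L(X)/Z(L(X))`. -/
def CentralQuot (p : ℕ) (X : Type*) : Type _ :=
  LGroup p X ⧸ Subgroup.center (LGroup p X)

instance (p : ℕ) (X : Type*) : Group (CentralQuot p X) :=
  inferInstanceAs (Group (LGroup p X ⧸ Subgroup.center (LGroup p X)))

/-- The image of `g ∈ L(X)` in the central quotient `L(X)/Z(L(X))`. -/
def cbar {p : ℕ} {X : Type*} (g : LGroup p X) : CentralQuot p X :=
  QuotientGroup.mk g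

section MeklerAux

open Subgroup

variable {p : ℕ} {X : Type*}

/-- A generic generator of `L(X)`. -/
def eGen (p : ℕ) {X : Type*} (x : X ⊕ X) : LGroup p X :=
  QuotientGroup.mk (FreeGroup.of x)

lemma mk_surjLG : Function.Surjective
    (QuotientGroup.mk' (Subgroup.normalClosure (LRelators p X))) :=
  QuotientGroup.mk'_surjective _

lemma LG.hom_ext {G : Type*} [Group G] {f g : LGroup p X →* G}
    (h : ∀ x, f (eGen p x) = g (eGen p x)) : f = g :=
  QuotientGroup.monoidHom_ext _ (FreeGroup.ext_hom _ _ fun a => h a)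

lemma LG.pow_p (g : LGroup p X) : g ^ p = 1 := by
  obtain ⟨w, rfl⟩ := mk_surjLG (p := p) (X := X) g
  have hmp : (QuotientGroup.mk' (Subgroup.normalClosure (LRelators p X))) (w ^ p)
      = (QuotientGroup.mk' (Subgroup.normalClosure (LRelators p X))) w ^ p := map_pow _ _ _
  exact hmp.symm.trans ((QuotientGroup.eq_one_iff _).mpr
    (Subgroup.subset_normalClosure (Or.inl (Or.inl ⟨w, rfl⟩))))

lemma LG.triple (g h k : LGroup p X) : ⁅⁅g, h⁆, k⁆ = 1 := by
  obtain ⟨u, rfl⟩ := mk_surjLG (p := p) (X := X) g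
  obtain ⟨v, rfl⟩ := mk_surjLG (p := p) (X := X) h
  obtain ⟨t, rfl⟩ := mk_surjLG (p := p) (X := X) k
  have hmc : (QuotientGroup.mk' (Subgroup.normalClosure (LRelators p X))) ⁅⁅u, v⁆, t⁆
      = ⁅⁅(QuotientGroup.mk' (Subgroup.normalClosure (LRelators p X))) u,
          (QuotientGroup.mk' (Subgroup.normalClosure (LRelators p X))) v⁆,
        (QuotientGroup.mk' (Subgroup.normalClosure (LRelators p X))) t⁆ := by
    rw [map_commutatorElement, map_commutatorElement]
  exact hmc.symm.trans ((QuotientGroup.eq_one_iff _).mpr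
    (Subgroup.subset_normalClosure (Or.inl (Or.inr ⟨u, v, t, rfl⟩))))

lemma LG.comm_mem_center (g h : LGroup p X) : ⁅g, h⁆ ∈ Subgroup.center (LGroup p X) :=
  Subgroup.mem_center_iff.mpr fun k =>
    (commutatorElement_eq_one_iff_mul_comm.mp (LG.triple g h k)).symm

/-- The quotient map onto the central quotient, as a hom. -/
def cbarHom (p : ℕ) (X : Type*) : LGroup p X →* CentralQuot p X :=
  QuotientGroup.mk' (Subgroup.center (LGroup p X))

lemma cbar_eq (g : LGroup p X) : cbar g = cbarHom p X g := rfl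

instance : CommGroup (CentralQuot p X) :=
  { (inferInstance : Group (CentralQuot p X)) with
    mul_comm := by
      intro a b
      obtain ⟨g, rfl⟩ := QuotientGroup.mk'_surjective (Subgroup.center (LGroup p X)) a
      obtain ⟨h, rfl⟩ := QuotientGroup.mk'_surjective (Subgroup.center (LGroup p X)) b
      refine commutatorElement_eq_one_iff_mul_comm.mp ?_
      have hmc : (QuotientGroup.mk' (Subgroup.center (LGroup p X))) ⁅g, h⁆
          = ⁅(QuotientGroup.mk' (Subgroup.center (LGroup p X))) g,
              (QuotientGroup.mk' (Subgroup.center (LGroup p X))) h⁆ :=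
        map_commutatorElement _ _ _
      exact hmc.symm.trans ((QuotientGroup.eq_one_iff _).mpr
        (LG.comm_mem_center g h)) }

end MeklerAux
section MeklerAb

open Subgroup

variable {p : ℕ} {X : Type*}

lemma multFinsupp_pow_p (y : Multiplicative ((X ⊕ X) →₀ ZMod p)) : y ^ p = 1 := by
  have h : Multiplicative.toAdd (y ^ p) = 0 := by
    rw [toAdd_pow]
    ext x
    have h2 := AddMonoidHom.map_nsmul (Finsupp.applyAddHom (M := ZMod p) x)
      p (Multiplicative.toAdd y)
    simp only [Finsupp.applyAddHom_apply] at h2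
    rw [Finsupp.coe_zero, Pi.zero_apply, h2, nsmul_eq_mul, ZMod.natCast_self, zero_mul]
  rw [← ofAdd_toAdd (y ^ p), h, ofAdd_zero]

open scoped Classical

/-- Abelianization map on the free group. -/
noncomputable def AbF (p : ℕ) (X : Type*) : FreeGroup (X ⊕ X) →* Multiplicative ((X ⊕ X) →₀ ZMod p) :=
  FreeGroup.lift fun x => Multiplicative.ofAdd (Finsupp.single x (1 : ZMod p))

/-- Abelianization map on `L(X)` with values in the `ZMod p` valued finsupps. -/
noncomputable def AbLG (p : ℕ) (X : Type*) : LGroup p X →* Multiplicative ((X ⊕ X) →₀ ZMod p) :=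
  QuotientGroup.lift _ (AbF p X) (by
    have hker : Subgroup.normalClosure (LRelators p X) ≤ (AbF p X).ker := by
      apply Subgroup.normalClosure_le_normal
      intro w hw
      simp only [LRelators, Set.mem_union, Set.mem_setOf_eq] at hw
      rcases hw with ((⟨u, rfl⟩ | ⟨u, v, t, rfl⟩) | ⟨v, rfl⟩)
      · exact MonoidHom.mem_ker.mpr (by rw [map_pow]; exact multFinsupp_pow_p _)
      · exact MonoidHom.mem_ker.mpr (by
          rw [map_commutatorElement]
          exact commutatorElement_eq_one_iff_mul_comm.mpr (mul_comm _ _))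
      · exact MonoidHom.mem_ker.mpr (by
          rw [map_commutatorElement]
          exact commutatorElement_eq_one_iff_mul_comm.mpr (mul_comm _ _))
    intro w hw
    exact MonoidHom.mem_ker.mp (hker hw))

/-- The coordinates of an element of `L(X)` in the abelianization. -/
noncomputable def co {p : ℕ} {X : Type*} (g : LGroup p X) (x : X ⊕ X) : ZMod p :=
  Multiplicative.toAdd (AbLG p X g) x

lemma co_mul (g h : LGroup p X) (x : X ⊕ X) : co (g * h) x = co g x + co h x := by
  unfold co
  rw [map_mul, toAdd_mul, Finsupp.add_apply]

lemma co_inv (g : LGroup p X) (x : X ⊕ X) : co g⁻¹ x = - co g x := by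
  unfold co
  rw [map_inv, toAdd_inv, Finsupp.neg_apply]

lemma co_pow (g : LGroup p X) (n : ℕ) (x : X ⊕ X) :
    co (g ^ n) x = (n : ZMod p) * co g x := by
  unfold co
  rw [map_pow, toAdd_pow]
  have h2 := AddMonoidHom.map_nsmul (Finsupp.applyAddHom (M := ZMod p) x)
    n (Multiplicative.toAdd (AbLG p X g))
  simp only [Finsupp.applyAddHom_apply] at h2
  rw [h2, nsmul_eq_mul]

lemma AbLG_eGen (x : X ⊕ X) :
    AbLG p X (eGen p x) = Multiplicative.ofAdd (Finsupp.single x (1 : ZMod p)) := by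
  show AbLG p X (QuotientGroup.mk (FreeGroup.of x)) = _
  rw [AbLG]
  erw [QuotientGroup.lift_mk]
  rw [AbF, FreeGroup.lift_apply_of]

lemma co_eGen (y x : X ⊕ X) :
    co (eGen p y) x = if y = x then (1 : ZMod p) else 0 := by
  unfold co
  rw [AbLG_eGen, toAdd_ofAdd]
  simp [Finsupp.single_apply]

end MeklerAb
section MeklerKernel

open Subgroup

variable {p : ℕ} {X : Type*}

/-- Component maps for the section of the abelianization. -/
noncomputable def compZ (p : ℕ) {X : Type*} (x : X ⊕ X) :
    ZMod p →+ Additive (CentralQuot p X) :=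
  ZMod.lift p ⟨zmultiplesHom (Additive (CentralQuot p X))
      (Additive.ofMul (cbar (eGen p x))), by
    have hz : (cbar (eGen p x) : CentralQuot p X) ^ p = 1 := by
      rw [cbar_eq, ← map_pow, LG.pow_p, map_one]
    show ((p : ℤ) • Additive.ofMul (cbar (eGen p x))) = 0
    rw [natCast_zsmul, ← ofMul_pow, hz, ofMul_one]⟩

/-- Section of the abelianization into the central quotient. -/
noncomputable def sHom (p : ℕ) (X : Type*) :
    Multiplicative ((X ⊕ X) →₀ ZMod p) →* CentralQuot p X where
  toFun f := Additive.toMul (Finsupp.liftAddHom (compZ p) (Multiplicative.toAdd f))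
  map_one' := by
    simp
  map_mul' f g := by
    simp only [toAdd_mul, map_add]
    rfl

lemma sHom_Ab : (sHom p X).comp (AbLG p X) = cbarHom p X := by
  apply LG.hom_ext
  intro x
  show Additive.toMul (Finsupp.liftAddHom (compZ p)
      (Multiplicative.toAdd (AbLG p X (eGen p x)))) = cbarHom p X (eGen p x)
  rw [AbLG_eGen, toAdd_ofAdd, Finsupp.liftAddHom_apply_single]
  have h1 : ((1 : ℤ) : ZMod p) = (1 : ZMod p) := by push_cast; rfl
  rw [compZ, ← h1, ZMod.lift_coe]
  show Additive.toMul ((1 : ℤ) • Additive.ofMul (cbar (eGen p x))) = _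
  rw [one_zsmul, toMul_ofMul]
  rfl

lemma cbar_eq_one_of_co (g : LGroup p X) (h0 : ∀ x, co g x = 0) : cbar g = 1 := by
  have hAb : AbLG p X g = 1 := by
    rw [← ofAdd_toAdd (AbLG p X g)]
    have : Multiplicative.toAdd (AbLG p X g) = 0 := by
      ext x; exact h0 x
    rw [this, ofAdd_zero]
  have h2 : cbarHom p X g = sHom p X (AbLG p X g) :=
    (DFunLike.congr_fun (sHom_Ab (p := p) (X := X)) g).symm
  rw [cbar_eq, h2, hAb, map_one]

lemma cbar_eq_of_co (g h : LGroup p X) (hc : ∀ x, co g x = co h x) :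
    cbar g = cbar h := by
  have h1 : cbar (g * h⁻¹) = 1 :=
    cbar_eq_one_of_co _ (fun x => by rw [co_mul, co_inv, hc x, add_neg_cancel])
  have h2 : cbarHom p X g * (cbarHom p X h)⁻¹ = 1 := by
    rw [← map_inv, ← map_mul]; exact h1
  rw [cbar_eq, cbar_eq]
  exact mul_inv_eq_one.mp h2

end MeklerKernel
section MeklerHeis

/-- The Heisenberg group over `ZMod p`. -/
@[ext] structure Heis (p : ℕ) where
  a : ZMod p
  b : ZMod p
  c : ZMod p

namespace Heis

variable {p : ℕ}

instance : One (Heis p) := ⟨⟨0, 0, 0⟩⟩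
instance : Mul (Heis p) := ⟨fun x y => ⟨x.a + y.a, x.b + y.b, x.c + y.c + x.a * y.b⟩⟩
instance : Inv (Heis p) := ⟨fun x => ⟨-x.a, -x.b, x.a * x.b - x.c⟩⟩

@[simp] lemma mul_a (x y : Heis p) : (x * y).a = x.a + y.a := rfl
@[simp] lemma mul_b (x y : Heis p) : (x * y).b = x.b + y.b := rfl
@[simp] lemma mul_c (x y : Heis p) : (x * y).c = x.c + y.c + x.a * y.b := rfl
@[simp] lemma one_a : (1 : Heis p).a = 0 := rfl
@[simp] lemma one_b : (1 : Heis p).b = 0 := rfl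
@[simp] lemma one_c : (1 : Heis p).c = 0 := rfl
@[simp] lemma inv_a (x : Heis p) : x⁻¹.a = -x.a := rfl
@[simp] lemma inv_b (x : Heis p) : x⁻¹.b = -x.b := rfl
@[simp] lemma inv_c (x : Heis p) : x⁻¹.c = x.a * x.b - x.c := rfl

instance : Group (Heis p) where
  mul_assoc x y z := by ext <;> simp <;> ring
  one_mul x := by ext <;> simp
  mul_one x := by ext <;> simp
  inv_mul_cancel x := by ext <;> simp <;> ring

lemma pow_eq (x : Heis p) (n : ℕ) :
    x ^ n = ⟨(n : ZMod p) * x.a, (n : ZMod p) * x.b,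
      (n : ZMod p) * x.c + ((n.choose 2 : ℕ) : ZMod p) * (x.a * x.b)⟩ := by
  induction n with
  | zero => ext <;> simp
  | succ n ih =>
      rw [pow_succ, ih]
      ext <;> simp [Nat.choose_succ_succ, Nat.choose_one_right] <;> push_cast <;> ring

lemma pow_p (hp : p.Prime) (h2 : 2 < p) (x : Heis p) : x ^ p = 1 := by
  have hch : ((p.choose 2 : ℕ) : ZMod p) = 0 :=
    (ZMod.natCast_eq_zero_iff _ _).mpr (hp.dvd_choose_self two_ne_zero h2)
  rw [pow_eq]
  ext <;> simp [hch, ZMod.natCast_self]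

lemma commutator_eq (x y : Heis p) : ⁅x, y⁆ = ⟨0, 0, x.a * y.b - y.a * x.b⟩ := by
  rw [commutatorElement_def]
  ext <;> simp <;> ring

lemma triple_comm (x y z : Heis p) : ⁅⁅x, y⁆, z⁆ = 1 := by
  rw [commutator_eq, commutator_eq]
  ext <;> simp

end Heis

end MeklerHeis
section MeklerMinor

open scoped Classical

variable {p : ℕ} {X : Type*}

/-- Generator images for the Heisenberg detection homomorphism. -/
noncomputable def heisF (p : ℕ) {X : Type*} (x0 y0 : X ⊕ X) : (X ⊕ X) → Heis p :=
  fun x => ⟨if x = x0 then 1 else 0, if x = y0 then 1 else 0, 0⟩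

/-- The detection homomorphism `L(X) →* Heis p`. -/
noncomputable def heisLift (hp : p.Prime) (h2 : 2 < p) (x0 y0 : X ⊕ X)
    (hpair : ∀ v : X, ¬(Sum.inl v = x0 ∧ Sum.inr v = y0) ∧
      ¬(Sum.inr v = x0 ∧ Sum.inl v = y0)) :
    LGroup p X →* Heis p :=
  QuotientGroup.lift _ (FreeGroup.lift (heisF p x0 y0)) (by
    have hker : Subgroup.normalClosure (LRelators p X) ≤
        (FreeGroup.lift (heisF p x0 y0)).ker := by
      apply Subgroup.normalClosure_le_normal
      intro w hw
      simp only [LRelators, Set.mem_union, Set.mem_setOf_eq] at hw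
      rcases hw with ((⟨u, rfl⟩ | ⟨u, v, t, rfl⟩) | ⟨v, rfl⟩)
      · exact MonoidHom.mem_ker.mpr (by rw [map_pow]; exact Heis.pow_p hp h2 _)
      · exact MonoidHom.mem_ker.mpr (by
          rw [map_commutatorElement, map_commutatorElement]
          exact Heis.triple_comm _ _ _)
      · refine MonoidHom.mem_ker.mpr ?_
        rw [map_commutatorElement, FreeGroup.lift_apply_of, FreeGroup.lift_apply_of,
          Heis.commutator_eq]
        rcases hpair v with ⟨h1, h1'⟩
        ext <;> simp [heisF]
        split_ifs <;> simp_all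
    intro w hw
    exact MonoidHom.mem_ker.mp (hker hw))

/-- The first coordinate projection of the Heisenberg group. -/
def prA (p : ℕ) : Heis p →* Multiplicative (ZMod p) where
  toFun h := Multiplicative.ofAdd h.a
  map_one' := rfl
  map_mul' _ _ := rfl

/-- The second coordinate projection of the Heisenberg group. -/
def prB (p : ℕ) : Heis p →* Multiplicative (ZMod p) where
  toFun h := Multiplicative.ofAdd h.b
  map_one' := rfl
  map_mul' _ _ := rfl

/-- Evaluation of a finsupp, as hom on the multiplicative type. -/
noncomputable def evalM (p : ℕ) {X : Type*} (x0 : X ⊕ X) :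
    Multiplicative ((X ⊕ X) →₀ ZMod p) →* Multiplicative (ZMod p) :=
  AddMonoidHom.toMultiplicative (Finsupp.applyAddHom x0)

lemma heisLift_eGen (hp : p.Prime) (h2 : 2 < p) (x0 y0 : X ⊕ X) (hpair) (x : X ⊕ X) :
    heisLift hp h2 x0 y0 hpair (eGen p x) = heisF p x0 y0 x := by
  show heisLift hp h2 x0 y0 hpair (QuotientGroup.mk (FreeGroup.of x)) = _
  rw [heisLift]
  erw [QuotientGroup.lift_mk]
  rw [FreeGroup.lift_apply_of]

lemma heisLift_a (hp : p.Prime) (h2 : 2 < p) (x0 y0 : X ⊕ X) (hpair)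
    (g : LGroup p X) : (heisLift hp h2 x0 y0 hpair g).a = co g x0 := by
  have hcomp : (prA p).comp (heisLift hp h2 x0 y0 hpair) =
      (evalM p x0).comp (AbLG p X) := by
    apply LG.hom_ext
    intro x
    show Multiplicative.ofAdd ((heisLift hp h2 x0 y0 hpair (eGen p x)).a) =
      evalM p x0 (AbLG p X (eGen p x))
    rw [heisLift_eGen, AbLG_eGen]
    show Multiplicative.ofAdd (if x = x0 then (1 : ZMod p) else 0) =
      Multiplicative.ofAdd ((Finsupp.single x (1 : ZMod p)) x0)
    rw [Finsupp.single_apply]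
  have h := DFunLike.congr_fun hcomp g
  exact congrArg Multiplicative.toAdd h

lemma heisLift_b (hp : p.Prime) (h2 : 2 < p) (x0 y0 : X ⊕ X) (hpair)
    (g : LGroup p X) : (heisLift hp h2 x0 y0 hpair g).b = co g y0 := by
  have hcomp : (prB p).comp (heisLift hp h2 x0 y0 hpair) =
      (evalM p y0).comp (AbLG p X) := by
    apply LG.hom_ext
    intro x
    show Multiplicative.ofAdd ((heisLift hp h2 x0 y0 hpair (eGen p x)).b) =
      evalM p y0 (AbLG p X (eGen p x))
    rw [heisLift_eGen, AbLG_eGen]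
    show Multiplicative.ofAdd (if x = y0 then (1 : ZMod p) else 0) =
      Multiplicative.ofAdd ((Finsupp.single x (1 : ZMod p)) y0)
    rw [Finsupp.single_apply]
  have h := DFunLike.congr_fun hcomp g
  exact congrArg Multiplicative.toAdd h

lemma minor_eq (hp : p.Prime) (h2 : 2 < p) {c d : LGroup p X} (hcd : ⁅c, d⁆ = 1)
    (x0 y0 : X ⊕ X)
    (hpair : ∀ v : X, ¬(Sum.inl v = x0 ∧ Sum.inr v = y0) ∧
      ¬(Sum.inr v = x0 ∧ Sum.inl v = y0)) :
    co c x0 * co d y0 = co d x0 * co c y0 := by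
  set H := heisLift hp h2 x0 y0 hpair with hH
  have h1 : ⁅H c, H d⁆ = 1 := by rw [← map_commutatorElement, hcd, map_one]
  rw [Heis.commutator_eq] at h1
  have h3 := congrArg Heis.c h1
  simp only [Heis.one_c] at h3
  rw [heisLift_a, heisLift_a, heisLift_b, heisLift_b] at h3
  linear_combination h3

end MeklerMinor
section MeklerFinal

variable {p : ℕ} {X : Type*}

lemma cbar_mul_pow (g h : LGroup p X) (m n : ℕ) :
    cbar (g ^ m * h ^ n) = cbar g ^ m * cbar h ^ n := by
  have h1 : cbarHom p X (g ^ m * h ^ n) = cbarHom p X g ^ m * cbarHom p X h ^ n := by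
    rw [map_mul, map_pow, map_pow]
  exact h1

lemma cbar_pow (g : LGroup p X) (n : ℕ) : cbar (g ^ n) = cbar g ^ n := by
  have h1 : cbarHom p X (g ^ n) = cbarHom p X g ^ n := map_pow _ _ _
  exact h1

end MeklerFinal
/-- If `c, d ∈ L(X)` commute, then in the central quotient either the subgroup
generated by their images equals the one generated by the images of some pair
`a_v, b_v`, or it is cyclic. -/
theorem commuting_pairs {p : ℕ} (hp : p.Prime) (hodd : Odd p) {X : Type*}
    (c d : LGroup p X) (hcd : ⁅c, d⁆ = 1) :
    (∃ v : X, Subgroup.closure {cbar c, cbar d} =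
      Subgroup.closure {cbar (aGen p v), cbar (bGen p v)}) ∨
    (∃ z : CentralQuot p X, Subgroup.closure {cbar c, cbar d} =
      Subgroup.zpowers z) := by
  haveI : Fact p.Prime := ⟨hp⟩
  haveI : NeZero p := ⟨hp.ne_zero⟩
  have hne2 : p ≠ 2 := by rintro rfl; exact (Nat.not_odd_iff_even.mpr even_two) hodd
  have h2 : 2 < p := lt_of_le_of_ne hp.two_le (Ne.symm hne2)
  have hm : ∀ x0 y0 : X ⊕ X,
      (∀ v : X, ¬(Sum.inl v = x0 ∧ Sum.inr v = y0) ∧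
        ¬(Sum.inr v = x0 ∧ Sum.inl v = y0)) →
      co c x0 * co d y0 = co d x0 * co c y0 :=
    fun x0 y0 hpr => minor_eq hp h2 hcd x0 y0 hpr
  have hmemc : cbar c ∈ Subgroup.closure {cbar c, cbar d} :=
    Subgroup.subset_closure (Set.mem_insert _ _)
  have hmemd : cbar d ∈ Subgroup.closure {cbar c, cbar d} :=
    Subgroup.subset_closure (Set.mem_insert_of_mem _ rfl)
  by_cases hΔ : ∃ v : X,
      co c (Sum.inl v) * co d (Sum.inr v) - co c (Sum.inr v) * co d (Sum.inl v) ≠ 0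
  · -- rank-2 case: the pair `a_v, b_v`
    left
    obtain ⟨v, hv⟩ := hΔ
    have hvan : ∀ x : X ⊕ X, x ≠ Sum.inl v → x ≠ Sum.inr v →
        co c x = 0 ∧ co d x = 0 := by
      intro x hxa hxb
      have e1 : co c x * co d (Sum.inl v) = co d x * co c (Sum.inl v) := by
        apply hm
        intro v'
        constructor
        · rintro ⟨hh1, hh2⟩; simp at hh2
        · rintro ⟨hh1, hh2⟩
          injection hh2 with h; subst h
          exact hxb hh1.symm
      have e2 : co c x * co d (Sum.inr v) = co d x * co c (Sum.inr v) := by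
        apply hm
        intro v'
        constructor
        · rintro ⟨hh1, hh2⟩
          injection hh2 with h; subst h
          exact hxa hh1.symm
        · rintro ⟨hh1, hh2⟩; simp at hh2
      constructor
      · have h0 : co c x * (co c (Sum.inl v) * co d (Sum.inr v) -
            co c (Sum.inr v) * co d (Sum.inl v)) = 0 := by
          linear_combination co c (Sum.inl v) * e2 - co c (Sum.inr v) * e1
        exact (mul_eq_zero.mp h0).resolve_right hv
      · have h0 : co d x * (co c (Sum.inl v) * co d (Sum.inr v) -
            co c (Sum.inr v) * co d (Sum.inl v)) = 0 := by
          linear_combination co d (Sum.inl v) * e2 - co d (Sum.inr v) * e1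
        exact (mul_eq_zero.mp h0).resolve_right hv
    refine ⟨v, ?_⟩
    have hexp : ∀ g : LGroup p X, (∀ x, x ≠ Sum.inl v → x ≠ Sum.inr v → co g x = 0) →
        cbar g = cbar (eGen p (Sum.inl v)) ^ (co g (Sum.inl v)).val *
          cbar (eGen p (Sum.inr v)) ^ (co g (Sum.inr v)).val := by
      intro g hg
      have hco : ∀ x, co g x = co (eGen p (Sum.inl v) ^ (co g (Sum.inl v)).val *
          eGen p (Sum.inr v) ^ (co g (Sum.inr v)).val) x := by
        intro x
        rw [co_mul, co_pow, co_pow, co_eGen, co_eGen,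
          ZMod.natCast_zmod_val, ZMod.natCast_zmod_val]
        by_cases hxa : x = Sum.inl v
        · subst hxa; simp
        · by_cases hxb : x = Sum.inr v
          · subst hxb; simp
          · rw [hg x hxa hxb, if_neg (fun h => hxa h.symm),
              if_neg (fun h => hxb h.symm)]
            ring
      rw [cbar_eq_of_co _ _ hco, cbar_mul_pow]
    have hmemA : cbar (aGen p v) ∈
        Subgroup.closure {cbar (aGen p v), cbar (bGen p v)} :=
      Subgroup.subset_closure (Set.mem_insert _ _)
    have hmemB : cbar (bGen p v) ∈
        Subgroup.closure {cbar (aGen p v), cbar (bGen p v)} :=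
      Subgroup.subset_closure (Set.mem_insert_of_mem _ rfl)
    have hgen : ∀ (s t : ZMod p) (y : X ⊕ X),
        (∀ x, co (eGen p y) x = s * co c x + t * co d x) →
        cbar (eGen p y) = cbar c ^ s.val * cbar d ^ t.val := by
      intro s t y hco
      have hco' : ∀ x, co (eGen p y) x = co (c ^ s.val * d ^ t.val) x := by
        intro x
        rw [co_mul, co_pow, co_pow, ZMod.natCast_zmod_val, ZMod.natCast_zmod_val]
        exact hco x
      rw [cbar_eq_of_co _ _ hco', cbar_mul_pow]
    apply le_antisymm
    · rw [Subgroup.closure_le]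
      intro g hg
      simp only [Set.mem_insert_iff, Set.mem_singleton_iff] at hg
      rw [SetLike.mem_coe]
      rcases hg with rfl | rfl
      · rw [hexp c (fun x h1 h2 => (hvan x h1 h2).1)]
        exact mul_mem (pow_mem hmemA _) (pow_mem hmemB _)
      · rw [hexp d (fun x h1 h2 => (hvan x h1 h2).2)]
        exact mul_mem (pow_mem hmemA _) (pow_mem hmemB _)
    · rw [Subgroup.closure_le]
      intro g hg
      simp only [Set.mem_insert_iff, Set.mem_singleton_iff] at hg
      rw [SetLike.mem_coe]
      have hA : cbar (aGen p v) = cbar c ^ ((co d (Sum.inr v) /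
          (co c (Sum.inl v) * co d (Sum.inr v) - co c (Sum.inr v) * co d (Sum.inl v)))).val *
          cbar d ^ ((-(co c (Sum.inr v)) /
          (co c (Sum.inl v) * co d (Sum.inr v) - co c (Sum.inr v) * co d (Sum.inl v)))).val := by
        apply hgen
        intro x
        rw [co_eGen]
        by_cases hxa : x = Sum.inl v
        · subst hxa; rw [if_pos rfl, div_mul_eq_mul_div, div_mul_eq_mul_div, ← add_div,
            eq_div_iff hv]; ring
        · by_cases hxb : x = Sum.inr v
          · subst hxb; rw [if_neg (by simp)]; field_simp; ring
          · rw [if_neg (fun h => hxa h.symm), (hvan x hxa hxb).1,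
              (hvan x hxa hxb).2]
            ring
      have hB : cbar (bGen p v) = cbar c ^ ((-(co d (Sum.inl v)) /
          (co c (Sum.inl v) * co d (Sum.inr v) - co c (Sum.inr v) * co d (Sum.inl v)))).val *
          cbar d ^ ((co c (Sum.inl v) /
          (co c (Sum.inl v) * co d (Sum.inr v) - co c (Sum.inr v) * co d (Sum.inl v)))).val := by
        apply hgen
        intro x
        rw [co_eGen]
        by_cases hxa : x = Sum.inl v
        · subst hxa; rw [if_neg (by simp)]; field_simp; ring
        · by_cases hxb : x = Sum.inr v
          · subst hxb; rw [if_pos rfl, div_mul_eq_mul_div, div_mul_eq_mul_div, ← add_div,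
              eq_div_iff hv]; ring
          · rw [if_neg (fun h => hxb h.symm), (hvan x hxa hxb).1,
              (hvan x hxa hxb).2]
            ring
      rcases hg with rfl | rfl
      · rw [hA]
        exact mul_mem (pow_mem hmemc _) (pow_mem hmemd _)
      · rw [hB]
        exact mul_mem (pow_mem hmemc _) (pow_mem hmemd _)
  · -- rank ≤ 1 case: cyclic
    right
    push_neg at hΔ
    have hall : ∀ x y : X ⊕ X, co c x * co d y = co d x * co c y := by
      intro x y
      by_cases hpr : ∃ v : X, (x = Sum.inl v ∧ y = Sum.inr v) ∨
          (x = Sum.inr v ∧ y = Sum.inl v)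
      · obtain ⟨v, hcase | hcase⟩ := hpr
        · obtain ⟨rfl, rfl⟩ := hcase
          linear_combination hΔ v
        · obtain ⟨rfl, rfl⟩ := hcase
          linear_combination -hΔ v
      · apply hm
        intro v'
        constructor
        · rintro ⟨hh1, hh2⟩
          exact hpr ⟨v', Or.inl ⟨hh1.symm, hh2.symm⟩⟩
        · rintro ⟨hh1, hh2⟩
          exact hpr ⟨v', Or.inr ⟨hh1.symm, hh2.symm⟩⟩
    by_cases hc0 : ∀ x, co c x = 0
    · refine ⟨cbar d, ?_⟩
      have h1 : cbar c = 1 := cbar_eq_one_of_co c hc0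
      apply le_antisymm
      · rw [Subgroup.closure_le]
        intro g hg
        simp only [Set.mem_insert_iff, Set.mem_singleton_iff] at hg
        rw [SetLike.mem_coe]
        rcases hg with rfl | rfl
        · rw [h1]; exact one_mem _
        · exact Subgroup.mem_zpowers _
      · rw [Subgroup.zpowers_le]
        exact Subgroup.subset_closure (Set.mem_insert_of_mem _ rfl)
    · push_neg at hc0
      obtain ⟨x0, hx0⟩ := hc0
      refine ⟨cbar c, ?_⟩
      have hk : ∀ y, co d y = (co d x0 / co c x0) * co c y := by
        intro y
        have h := hall x0 y
        field_simp
        linear_combination h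
      have hd : cbar d = cbar c ^ ((co d x0 / co c x0)).val := by
        have hco : ∀ x, co d x = co (c ^ ((co d x0 / co c x0)).val) x := by
          intro x
          rw [co_pow, ZMod.natCast_zmod_val]
          exact hk x
        rw [cbar_eq_of_co _ _ hco, cbar_pow]
      apply le_antisymm
      · rw [Subgroup.closure_le]
        intro g hg
        simp only [Set.mem_insert_iff, Set.mem_singleton_iff] at hg
        rw [SetLike.mem_coe]
        rcases hg with rfl | rfl
        · exact Subgroup.mem_zpowers _
        · rw [hd]
          exact Subgroup.pow_mem _ (Subgroup.mem_zpowers _) _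
      · rw [Subgroup.zpowers_le]
        exact Subgroup.subset_closure (Set.mem_insert _ _)
end

section
/- Fix an odd prime p and sets X, Y, W. Let g : L(X) → L(Y) and g' : L(Y) → L(W) be surjective group homomorphisms such that for every v ∈ X (respectively every y ∈ Y) the subgroup of the central quotient generated by the images of g(a_v), g(b_v) (respectively g'(a_y), g'(b_y)) is not cyclic, and let F(g) : X → Y and F(g') : Y → W be the induced maps, where F(g)(v) is the unique y with ⟨image of g(a_v), image of g(b_v)⟩ = ⟨image of a_y, image of b_y⟩ in L(Y)/Z(L(Y)), and similarly for F(g'). Then the composite g' ∘ g : L(X) → L(W) also satisfies the non-cyclicity condition for every v ∈ X, and F(g' ∘ g) = F(g') ∘ F(g). -/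
open scoped commutatorElement

lemma center_le_comap_aux {G H : Type*} [Group G] [Group H] (f : G →* H)
    (hf : Function.Surjective f) :
    Subgroup.center G ≤ (Subgroup.center H).comap f := by
  intro x hx
  rw [Subgroup.mem_comap, Subgroup.mem_center_iff]
  intro w
  obtain ⟨y, rfl⟩ := hf w
  rw [← map_mul, ← map_mul, (Subgroup.mem_center_iff.mp hx y)]

/-- The map induced by `f` on central quotients. -/
def centralQuotMap {G H : Type*} [Group G] [Group H] (f : G →* H)
    (hf : Function.Surjective f) :
    G ⧸ Subgroup.center G →* H ⧸ Subgroup.center H :=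
  QuotientGroup.map _ _ f (center_le_comap_aux f hf)

lemma closure_pair_image {p : ℕ} {Y W : Type*} (f : LGroup p Y →* LGroup p W)
    (hf : Function.Surjective f) (u v : LGroup p Y) :
    (Subgroup.closure {cbar (f u), cbar (f v)} : Subgroup (CentralQuot p W)) =
      Subgroup.map (centralQuotMap f hf) (Subgroup.closure {cbar u, cbar v}) := by
  rw [MonoidHom.map_closure]
  congr 1
  exact (Set.image_pair (centralQuotMap f hf) (cbar u) (cbar v)).symm

/-- Functoriality of the vertex map `F`: if `g : L(X) → L(Y)` and
`g' : L(Y) → L(W)` are surjective homomorphisms satisfying the non-cyclicity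
condition, with vertex maps `r = F(g)` and `r' = F(g')`, then `g' ∘ g` also
satisfies the non-cyclicity condition and its vertex map is `r' ∘ r`. -/
theorem vertex_map_functorial {p : ℕ} (hp : p.Prime) (hodd : Odd p)
    {X Y W : Type*}
    (g : LGroup p X →* LGroup p Y) (g' : LGroup p Y →* LGroup p W)
    (hg : Function.Surjective g) (hg' : Function.Surjective g')
    (hncg : ∀ v : X, ¬ ∃ z : CentralQuot p Y,
      Subgroup.closure {cbar (g (aGen p v)), cbar (g (bGen p v))} =
        Subgroup.zpowers z)
    (hncg' : ∀ y : Y, ¬ ∃ z : CentralQuot p W,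
      Subgroup.closure {cbar (g' (aGen p y)), cbar (g' (bGen p y))} =
        Subgroup.zpowers z)
    (r : X → Y) (r' : Y → W)
    (hr : ∀ v : X,
      Subgroup.closure {cbar (g (aGen p v)), cbar (g (bGen p v))} =
        Subgroup.closure {cbar (aGen p (r v)), cbar (bGen p (r v))})
    (hr' : ∀ y : Y,
      Subgroup.closure {cbar (g' (aGen p y)), cbar (g' (bGen p y))} =
        Subgroup.closure {cbar (aGen p (r' y)), cbar (bGen p (r' y))}) :
    (∀ v : X, ¬ ∃ z : CentralQuot p W,
      Subgroup.closure {cbar ((g'.comp g) (aGen p v)),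
          cbar ((g'.comp g) (bGen p v))} = Subgroup.zpowers z) ∧
    ∀ v : X,
      Subgroup.closure {cbar ((g'.comp g) (aGen p v)),
          cbar ((g'.comp g) (bGen p v))} =
        Subgroup.closure {cbar (aGen p (r' (r v))), cbar (bGen p (r' (r v)))} := by
  have key : ∀ v : X,
      Subgroup.closure {cbar ((g'.comp g) (aGen p v)),
          cbar ((g'.comp g) (bGen p v))} =
        Subgroup.closure {cbar (g' (aGen p (r v))), cbar (g' (bGen p (r v)))} := by
    intro v
    show Subgroup.closure {cbar (g' (g (aGen p v))), cbar (g' (g (bGen p v)))} = _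
    rw [closure_pair_image g' hg', closure_pair_image g' hg']
    exact congrArg _ (hr v)
  constructor
  · intro v ⟨z, hz⟩
    exact hncg' (r v) ⟨z, by rw [← key v, hz]⟩
  · intro v
    rw [key v, hr' (r v)]
end

section
/- Let (A_n, p_n)_{n∈ℕ} and (B_n, q_n)_{n∈ℕ} be ω-inverse systems of groups with surjective bindings, with limits G and H. If G and H are topologically isomorphic (there is a group isomorphism G → H that is a homeomorphism), then there exist nondecreasing functions φ, ψ : ℕ → ℕ with φ(ψ(n)) ≥ n and ψ(φ(n)) ≥ n for all n, and surjective group homomorphisms f_n : A_{φ(n)} → B_n and g_n : B_{ψ(n)} → A_n such that: for all k > n, q_{k,n} ∘ f_k = f_n ∘ p_{φ(k),φ(n)} and p_{k,n} ∘ g_k = g_n ∘ q_{ψ(k),ψ(n)}; and for all n, g_n ∘ f_{ψ(n)} = p_{φ(ψ(n)),n} and f_n ∘ g_{φ(n)} = q_{ψ(φ(n)),n}. -/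
/-- The interval composition `p_{k,n} = p_n ∘ p_{n+1} ∘ … ∘ p_{k-1} : A k →* A n`
of the binding maps of an ω-inverse system (the identity when `k = n`). -/
def intervalComp {A : ℕ → Type*} [∀ n, Group (A n)]
    (p : ∀ n, A (n + 1) →* A n) {n k : ℕ} (h : n ≤ k) : A k →* A n :=
  Nat.leRecOn h (fun {m} f => f.comp (p m)) (MonoidHom.id (A n))

/-- The limit of an ω-inverse system of groups, as a subgroup of the product
`∀ n, A n`. With each `A n` discrete and the product topology, its coercion to
a type is the limit as a topological group. -/
def invLimit {A : ℕ → Type*} [∀ n, Group (A n)] (p : ∀ n, A (n + 1) →* A n) :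
    Subgroup (∀ n, A n) where
  carrier := {x | ∀ n, p n (x (n + 1)) = x n}
  one_mem' := fun n => by simp
  mul_mem' := fun {a b} ha hb n => by
    simp only [Pi.mul_apply, map_mul, ha n, hb n]
  inv_mem' := fun {a} ha n => by
    simp only [Pi.inv_apply, map_inv, ha n]

section Aux
variable {A : ℕ → Type*} [∀ n, Group (A n)] (p : ∀ n, A (n + 1) →* A n)

theorem intervalComp_self {n : ℕ} (h : n ≤ n) : intervalComp p h = MonoidHom.id (A n) :=
  Nat.leRecOn_self _

theorem intervalComp_succ {n k : ℕ} (h : n ≤ k) (h2 : n ≤ k + 1) :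
    intervalComp p h2 = (intervalComp p h).comp (p k) :=
  Nat.leRecOn_succ h _

theorem intervalComp_le_succ (k : ℕ) : intervalComp p (Nat.le_succ k) = p k := by
  rw [intervalComp_succ p le_rfl, intervalComp_self]
  exact MonoidHom.id_comp _

theorem intervalComp_trans {n m k : ℕ} (h1 : n ≤ m) (h2 : m ≤ k) :
    (intervalComp p h1).comp (intervalComp p h2) = intervalComp p (h1.trans h2) := by
  induction k, h2 using Nat.le_induction with
  | base => rw [intervalComp_self]; exact MonoidHom.comp_id _
  | succ k hk ih =>
      rw [intervalComp_succ p hk, intervalComp_succ p (h1.trans hk),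
        ← MonoidHom.comp_assoc, ih]

theorem mem_invLimit {x : ∀ n, A n} : x ∈ invLimit p ↔ ∀ n, p n (x (n + 1)) = x n :=
  Iff.rfl

theorem invLimit_thread {x : ∀ n, A n} (hx : x ∈ invLimit p) {n k : ℕ} (h : n ≤ k) :
    intervalComp p h (x k) = x n := by
  induction k, h using Nat.le_induction with
  | base => rw [intervalComp_self]; rfl
  | succ k hk ih =>
      rw [intervalComp_succ p hk]
      have h1 : p k (x (k + 1)) = x k := (mem_invLimit p).mp hx k
      simpa [h1] using ih

noncomputable def invSec (hp : ∀ n, Function.Surjective (p n)) {n k : ℕ} (h : n ≤ k) :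
    A n → A k :=
  Nat.leRecOn h (fun {m} f a => Function.surjInv (hp m) (f a)) id

theorem invSec_succ (hp : ∀ n, Function.Surjective (p n)) {n k : ℕ} (h : n ≤ k)
    (h2 : n ≤ k + 1) :
    invSec p hp h2 = fun a => Function.surjInv (hp k) (invSec p hp h a) :=
  Nat.leRecOn_succ h _

theorem exists_invLimit_eq (hp : ∀ n, Function.Surjective (p n)) (n : ℕ) (a : A n) :
    ∃ x ∈ invLimit p, x n = a := by
  refine ⟨fun k => if h : n ≤ k then invSec p hp h a else intervalComp p (le_of_not_ge h) a,
    ?_, ?_⟩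
  · rw [mem_invLimit]
    intro k
    by_cases h : n ≤ k
    · simp only [dif_pos h, dif_pos (h.trans k.le_succ)]
      rw [invSec_succ p hp h]
      exact Function.surjInv_eq (hp k) _
    · by_cases h' : n ≤ k + 1
      · have hn : n = k + 1 := le_antisymm h' (by omega)
        subst hn
        simp only [dif_pos h', dif_neg h]
        rw [show invSec p hp h' = id from Nat.leRecOn_self _]
        exact (DFunLike.congr_fun (intervalComp_le_succ p k) a).symm
      · simp only [dif_neg h, dif_neg h']
        have := DFunLike.congr_fun
          (intervalComp_trans p (Nat.le_succ k) (le_of_not_ge h')) a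
        rw [intervalComp_le_succ] at this
        exact this
  · have hid : invSec p hp (le_refl n) = id := Nat.leRecOn_self _
    simp [hid]

theorem exists_ker_level [∀ n, TopologicalSpace (A n)] [∀ n, DiscreteTopology (A n)]
    {C : Type*} [Group C] [TopologicalSpace C] [DiscreteTopology C]
    (E : invLimit p →* C) (hE : Continuous E) :
    ∃ m, ∀ x : invLimit p, (x : ∀ k, A k) m = 1 → E x = 1 := by
  have hV : IsOpen ((E : invLimit p → C) ⁻¹' {1}) := (isOpen_discrete _).preimage hE
  obtain ⟨W, hW, hWV⟩ := isOpen_induced_iff.mp hV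
  have h1W : (1 : ∀ k, A k) ∈ W := by
    have h1 : (1 : invLimit p) ∈ (E : invLimit p → C) ⁻¹' {1} := by simp
    rw [← hWV] at h1
    exact h1
  obtain ⟨I, u, hu, hsub⟩ := isOpen_pi_iff.mp hW 1 h1W
  refine ⟨I.sup id, fun x hx => ?_⟩
  have hxW : (x : ∀ k, A k) ∈ W := by
    refine hsub fun i hi => ?_
    have hle : i ≤ I.sup id := Finset.le_sup (f := id) hi
    have ht : intervalComp p hle ((x : ∀ k, A k) (I.sup id)) = (x : ∀ k, A k) i :=
      invLimit_thread p x.2 hle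
    rw [hx, map_one] at ht
    rw [← ht]
    exact (hu i hi).2
  have hxV : x ∈ (E : invLimit p → C) ⁻¹' {1} := by rw [← hWV]; exact hxW
  simpa using hxV

end Aux

/-- Two topological groups are topologically isomorphic if there is a group
isomorphism between them that is a homeomorphism. -/
def TopIsoGrp (G H : Type*) [Group G] [Group H] [TopologicalSpace G]
    [TopologicalSpace H] : Prop :=
  ∃ e : G ≃* H, Continuous ⇑e ∧ Continuous ⇑e.symm

/-- If the limits of two ω-inverse systems of groups (surjective bindings,
discrete factors) are topologically isomorphic, then the systems admit mutually
inverse systems of level maps. -/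
theorem level_maps_of_limits_isomorphic {A B : ℕ → Type*} [∀ n, Group (A n)]
    [∀ n, Group (B n)] (p : ∀ n, A (n + 1) →* A n) (q : ∀ n, B (n + 1) →* B n)
    (hp : ∀ n, Function.Surjective (p n)) (hq : ∀ n, Function.Surjective (q n))
    [∀ n, TopologicalSpace (A n)] [∀ n, DiscreteTopology (A n)]
    [∀ n, TopologicalSpace (B n)] [∀ n, DiscreteTopology (B n)]
    (hiso : TopIsoGrp (invLimit p) (invLimit q)) :
    ∃ (φ ψ : ℕ → ℕ) (hφ : Monotone φ) (hψ : Monotone ψ)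
      (hφψ : ∀ n, n ≤ φ (ψ n)) (hψφ : ∀ n, n ≤ ψ (φ n))
      (f : ∀ n, A (φ n) →* B n) (g : ∀ n, B (ψ n) →* A n),
      (∀ n, Function.Surjective (f n)) ∧ (∀ n, Function.Surjective (g n)) ∧
      (∀ n k : ℕ, ∀ h : n < k,
        (intervalComp q h.le).comp (f k) = (f n).comp (intervalComp p (hφ h.le))) ∧
      (∀ n k : ℕ, ∀ h : n < k,
        (intervalComp p h.le).comp (g k) = (g n).comp (intervalComp q (hψ h.le))) ∧
      (∀ n, (g n).comp (f (ψ n)) = intervalComp p (hφψ n)) ∧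
      (∀ n, (f n).comp (g (φ n)) = intervalComp q (hψφ n)) := by
  classical
  obtain ⟨e, he, he'⟩ := hiso
  let πA : ∀ n, invLimit p →* A n := fun n => (Pi.evalMonoidHom A n).comp (invLimit p).subtype
  let πB : ∀ n, invLimit q →* B n := fun n => (Pi.evalMonoidHom B n).comp (invLimit q).subtype
  have hπA : ∀ n, Function.Surjective (πA n) := by
    intro n a
    obtain ⟨x, hx, hxa⟩ := exists_invLimit_eq p hp n a
    exact ⟨⟨x, hx⟩, hxa⟩
  have hπB : ∀ n, Function.Surjective (πB n) := by
    intro n b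
    obtain ⟨y, hy, hyb⟩ := exists_invLimit_eq q hq n b
    exact ⟨⟨y, hy⟩, hyb⟩
  let EB : ∀ n, invLimit p →* B n := fun n => (πB n).comp e.toMonoidHom
  let EA : ∀ n, invLimit q →* A n := fun n => (πA n).comp e.symm.toMonoidHom
  have hEBc : ∀ n, Continuous (EB n) := fun n =>
    ((continuous_apply n).comp continuous_subtype_val).comp he
  have hEAc : ∀ n, Continuous (EA n) := fun n =>
    ((continuous_apply n).comp continuous_subtype_val).comp he'
  choose c hc using fun n => exists_ker_level p (EB n) (hEBc n)
  choose d hd using fun n => exists_ker_level q (EA n) (hEAc n)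
  let φ : ℕ → ℕ := fun n => n + (Finset.range (n + 1)).sup c
  let ψ : ℕ → ℕ := fun n => n + (Finset.range (n + 1)).sup d
  have hφ : Monotone φ := fun a b hab => add_le_add hab
    (Finset.sup_mono (Finset.range_subset_range.mpr (by omega)))
  have hψ : Monotone ψ := fun a b hab => add_le_add hab
    (Finset.sup_mono (Finset.range_subset_range.mpr (by omega)))
  have hφn : ∀ n, n ≤ φ n := fun n => Nat.le_add_right _ _
  have hψn : ∀ n, n ≤ ψ n := fun n => Nat.le_add_right _ _
  have hcφ : ∀ n, c n ≤ φ n := fun n =>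
    (Finset.le_sup (Finset.mem_range.mpr (Nat.lt_succ_self n))).trans (Nat.le_add_left _ _)
  have hdψ : ∀ n, d n ≤ ψ n := fun n =>
    (Finset.le_sup (Finset.mem_range.mpr (Nat.lt_succ_self n))).trans (Nat.le_add_left _ _)
  have hφψ : ∀ n, n ≤ φ (ψ n) := fun n => (hψn n).trans (hφn _)
  have hψφ : ∀ n, n ≤ ψ (φ n) := fun n => (hφn n).trans (hψn _)
  have hkerf : ∀ n, (πA (φ n)).ker ≤ (EB n).ker := by
    intro n x hx
    have hx' : (x : ∀ k, A k) (φ n) = 1 := hx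
    have ht : intervalComp p (hcφ n) ((x : ∀ k, A k) (φ n)) = (x : ∀ k, A k) (c n) :=
      invLimit_thread p x.2 (hcφ n)
    rw [hx', map_one] at ht
    exact hc n x ht.symm
  have hkerg : ∀ n, (πB (ψ n)).ker ≤ (EA n).ker := by
    intro n y hy
    have hy' : (y : ∀ k, B k) (ψ n) = 1 := hy
    have ht : intervalComp q (hdψ n) ((y : ∀ k, B k) (ψ n)) = (y : ∀ k, B k) (d n) :=
      invLimit_thread q y.2 (hdψ n)
    rw [hy', map_one] at ht
    exact hd n y ht.symm
  let f₀ : ∀ n, A (φ n) →* B n := fun n =>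
    (πA (φ n)).liftOfRightInverse (Function.surjInv (hπA (φ n)))
      (Function.rightInverse_surjInv (hπA (φ n))) ⟨EB n, hkerf n⟩
  let g₀ : ∀ n, B (ψ n) →* A n := fun n =>
    (πB (ψ n)).liftOfRightInverse (Function.surjInv (hπB (ψ n)))
      (Function.rightInverse_surjInv (hπB (ψ n))) ⟨EA n, hkerg n⟩
  have hf : ∀ n (x : invLimit p), f₀ n (πA (φ n) x) = EB n x := fun n x =>
    MonoidHom.liftOfRightInverse_comp_apply _ _ _ _ _
  have hg : ∀ n (y : invLimit q), g₀ n (πB (ψ n) y) = EA n y := fun n y =>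
    MonoidHom.liftOfRightInverse_comp_apply _ _ _ _ _
  refine ⟨φ, ψ, hφ, hψ, hφψ, hψφ, f₀, g₀, ?_, ?_, ?_, ?_, ?_, ?_⟩
  · -- f₀ n surjective
    intro n b
    obtain ⟨y, hy⟩ := hπB n b
    refine ⟨πA (φ n) (e.symm y), ?_⟩
    rw [hf]
    have h2 : EB n (e.symm y) = πB n y := congrArg (πB n) (e.apply_symm_apply y)
    rw [h2]; exact hy
  · intro n a
    obtain ⟨x, hx⟩ := hπA n a
    refine ⟨πB (ψ n) (e x), ?_⟩
    rw [hg]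
    have h2 : EA n (e x) = πA n x := congrArg (πA n) (e.symm_apply_apply x)
    rw [h2]; exact hx
  · -- compat for f
    intro n k h
    ext a
    obtain ⟨X, hXa⟩ := hπA (φ k) a
    have h1 : a = πA (φ k) X := hXa.symm
    rw [MonoidHom.comp_apply, MonoidHom.comp_apply, h1, hf]
    have h2 : intervalComp p (hφ h.le) (πA (φ k) X) = πA (φ n) X :=
      invLimit_thread p X.2 (hφ h.le)
    rw [h2, hf]
    exact invLimit_thread q (e X).2 h.le
  · intro n k h
    ext b
    obtain ⟨Y, hYb⟩ := hπB (ψ k) b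
    have h1 : b = πB (ψ k) Y := hYb.symm
    rw [MonoidHom.comp_apply, MonoidHom.comp_apply, h1, hg]
    have h2 : intervalComp q (hψ h.le) (πB (ψ k) Y) = πB (ψ n) Y :=
      invLimit_thread q Y.2 (hψ h.le)
    rw [h2, hg]
    exact invLimit_thread p (e.symm Y).2 h.le
  · -- g ∘ f = p interval
    intro n
    ext a
    obtain ⟨X, hXa⟩ := hπA (φ (ψ n)) a
    have h1 : a = πA (φ (ψ n)) X := hXa.symm
    rw [MonoidHom.comp_apply, h1, hf]
    have h2 : EB (ψ n) X = πB (ψ n) (e X) := rfl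
    rw [h2, hg]
    have h3 : EA n (e X) = πA n X := congrArg (πA n) (e.symm_apply_apply X)
    rw [h3]
    exact (invLimit_thread p X.2 (hφψ n)).symm
  · intro n
    ext b
    obtain ⟨Y, hYb⟩ := hπB (ψ (φ n)) b
    have h1 : b = πB (ψ (φ n)) Y := hYb.symm
    rw [MonoidHom.comp_apply, h1, hg]
    have h2 : EA (φ n) Y = πA (φ n) (e.symm Y) := rfl
    rw [h2, hf]
    have h3 : EB n (e.symm Y) = πB n Y := congrArg (πB n) (e.apply_symm_apply Y)
    rw [h3]
    exact (invLimit_thread q Y.2 (hψφ n)).symm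
end

section
/- Let (A_n, p_n)_{n∈ℕ} be an ω-inverse system of countable groups with surjective binding homomorphisms, and let G be its limit. Then G is topologically isomorphic to a closed subgroup of the group Perm(ℕ) of all permutations of ℕ, equipped with the topology of pointwise convergence (ℕ discrete): there is a closed subgroup H of Perm(ℕ) and a group isomorphism G → H that is a homeomorphism. -/
/-- The topology of pointwise convergence on the permutation group of ℕ
(ℕ discrete): the topology induced by the inclusion into `ℕ → ℕ`. -/
instance permPointwiseTopology : TopologicalSpace (Equiv.Perm ℕ) :=
  TopologicalSpace.induced (fun π : Equiv.Perm ℕ => (π : ℕ → ℕ)) inferInstance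

section Aux

variable {A : ℕ → Type*} [∀ n, Group (A n)]

/-- The action of the inverse limit on the disjoint union of the `A n` by
left translation, as a homomorphism into the permutation group. -/
def toPermSigma (p : ∀ n, A (n + 1) →* A n) :
    invLimit p →* Equiv.Perm (Σ n, A n) where
  toFun x :=
    { toFun := fun s => ⟨s.1, (x : ∀ n, A n) s.1 * s.2⟩
      invFun := fun s => ⟨s.1, ((x : ∀ n, A n) s.1)⁻¹ * s.2⟩
      left_inv := fun s => by simp
      right_inv := fun s => by simp }
  map_one' := by
    apply Equiv.ext; intro s
    simp
  map_mul' := fun x y => by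
    apply Equiv.ext; intro s
    simp [mul_assoc]

/-- Extract the `A n`-component of an element of `ℕ` relative to an
identification `e : (Σ n, A n) ≃ ℕ`, defaulting to `1`. -/
noncomputable def extract (e : (Σ n, A n) ≃ ℕ) (n : ℕ) (m : ℕ) : A n :=
  if h : (e.symm m).1 = n then h ▸ (e.symm m).2 else 1

theorem extract_eq (e : (Σ n, A n) ≃ ℕ) (m : ℕ) :
    extract e (e.symm m).1 m = (e.symm m).2 := by
  unfold extract
  exact dif_pos rfl

theorem extract_apply (e : (Σ n, A n) ≃ ℕ) (n : ℕ) (a : A n) :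
    extract e n (e ⟨n, a⟩) = a := by
  have h := extract_eq e (e ⟨n, a⟩)
  rwa [e.symm_apply_apply] at h

end Aux

/-- The limit of an ω-inverse system of countable groups with surjective
bindings is topologically isomorphic to a closed subgroup of `Perm ℕ` with the
topology of pointwise convergence. -/
theorem limit_closed_subgroup_perm {A : ℕ → Type*} [∀ n, Group (A n)]
    [∀ n, Countable (A n)] (p : ∀ n, A (n + 1) →* A n)
    (hp : ∀ n, Function.Surjective (p n))
    [∀ n, TopologicalSpace (A n)] [∀ n, DiscreteTopology (A n)] :
    ∃ H : Subgroup (Equiv.Perm ℕ), IsClosed (H : Set (Equiv.Perm ℕ)) ∧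
      TopIsoGrp (invLimit p) H := by
  haveI : Infinite (Σ n, A n) :=
    Infinite.of_injective (fun n => (⟨n, 1⟩ : Σ n, A n))
      (fun a b h => congrArg Sigma.fst h)
  obtain ⟨e⟩ : Nonempty ((Σ n, A n) ≃ ℕ) := nonempty_equiv_of_countable
  -- the embedding into `Perm ℕ`
  let Φ : invLimit p →* Equiv.Perm ℕ :=
    { toFun := fun x => e.permCongr (toPermSigma p x)
      map_one' := by
        apply Equiv.ext; intro m
        simp [Equiv.permCongr_apply]
      map_mul' := fun x y => by
        apply Equiv.ext; intro m
        simp [Equiv.permCongr_apply, Equiv.Perm.mul_apply] }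
  have Φ_apply : ∀ (x : invLimit p) (s : Σ n, A n),
      Φ x (e s) = e ⟨s.1, (x : ∀ n, A n) s.1 * s.2⟩ := by
    intro x s
    simp [Φ, Equiv.permCongr_apply, toPermSigma]
  have hext : ∀ (x : invLimit p) (n : ℕ),
      extract e n (Φ x (e ⟨n, 1⟩)) = (x : ∀ n, A n) n := by
    intro x n
    rw [Φ_apply x ⟨n, 1⟩]
    simpa using extract_apply e n ((x : ∀ n, A n) n * 1)
  have hΦinj : Function.Injective Φ := by
    rw [injective_iff_map_eq_one]
    intro x hx
    ext n
    have := hext x n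
    rw [hx] at this
    simpa [extract_apply] using this.symm
  refine ⟨Φ.range, ?_, ?_⟩
  · -- closedness
    have hrange : (Φ.range : Set (Equiv.Perm ℕ)) =
        {π | ∀ n, p n (extract e (n + 1) (π (e ⟨n + 1, 1⟩))) =
          extract e n (π (e ⟨n, 1⟩))} ∩
        {π | ∀ s : Σ n, A n,
          π (e s) = e ⟨s.1, extract e s.1 (π (e ⟨s.1, 1⟩)) * s.2⟩} := by
      ext π
      constructor
      · rintro ⟨x, rfl⟩
        constructor
        · intro n
          rw [hext x n, hext x (n + 1)]
          exact x.2 n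
        · intro s
          rw [hext x s.1, Φ_apply x s]
      · rintro ⟨h1, h2⟩
        have hx : (fun n => extract e n (π (e ⟨n, 1⟩))) ∈ invLimit p := h1
        refine ⟨⟨_, hx⟩, ?_⟩
        apply Equiv.ext; intro m
        have h3 := h2 (e.symm m)
        rw [e.apply_symm_apply] at h3
        have h4 := Φ_apply ⟨_, hx⟩ (e.symm m)
        rw [e.apply_symm_apply] at h4
        rw [h4, h3]
    rw [hrange]
    have hcoe : Continuous (fun π : Equiv.Perm ℕ => (π : ℕ → ℕ)) :=
      continuous_induced_dom
    have heval : ∀ m : ℕ, Continuous (fun π : Equiv.Perm ℕ => π m) :=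
      fun m => (continuous_apply m).comp hcoe
    apply IsClosed.inter
    · have : {π : Equiv.Perm ℕ | ∀ n,
          p n (extract e (n + 1) (π (e ⟨n + 1, 1⟩))) =
            extract e n (π (e ⟨n, 1⟩))} =
          ⋂ n, {π : Equiv.Perm ℕ |
            p n (extract e (n + 1) (π (e ⟨n + 1, 1⟩))) =
              extract e n (π (e ⟨n, 1⟩))} := by
        ext; simp [Set.mem_iInter]
      rw [this]
      refine isClosed_iInter fun n => isClosed_eq ?_ ?_
      · exact (continuous_of_discreteTopology
          (f := fun m => p n (extract e (n + 1) m))).comp (heval (e ⟨n + 1, 1⟩))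
      · exact (continuous_of_discreteTopology
          (f := fun m => extract e n m)).comp (heval (e ⟨n, 1⟩))
    · have : {π : Equiv.Perm ℕ | ∀ s : Σ n, A n,
          π (e s) = e ⟨s.1, extract e s.1 (π (e ⟨s.1, 1⟩)) * s.2⟩} =
          ⋂ s : Σ n, A n, {π : Equiv.Perm ℕ |
            π (e s) = e ⟨s.1, extract e s.1 (π (e ⟨s.1, 1⟩)) * s.2⟩} := by
        ext; simp [Set.mem_iInter]
      rw [this]
      refine isClosed_iInter fun s => isClosed_eq (heval (e s)) ?_
      exact (continuous_of_discreteTopology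
        (f := fun m : ℕ => e ⟨s.1, extract e s.1 m * s.2⟩)).comp
          (heval (e ⟨s.1, 1⟩))
  · -- topological isomorphism
    have hcoe : Continuous (fun π : Equiv.Perm ℕ => (π : ℕ → ℕ)) :=
      continuous_induced_dom
    have heval : ∀ m : ℕ, Continuous (fun π : Equiv.Perm ℕ => π m) :=
      fun m => (continuous_apply m).comp hcoe
    refine ⟨MonoidHom.ofInjective hΦinj, ?_, ?_⟩
    · -- forward continuity
      apply continuous_induced_rng.2
      show Continuous fun x : invLimit p => (Φ x : Equiv.Perm ℕ)
      apply continuous_induced_rng.2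
      apply continuous_pi
      intro m
      have : (fun x : invLimit p => Φ x m) =
          (fun v : A (e.symm m).1 => e ⟨(e.symm m).1, v * (e.symm m).2⟩) ∘
            (fun x : invLimit p => (x : ∀ n, A n) (e.symm m).1) := by
        funext x
        have := Φ_apply x (e.symm m)
        rw [e.apply_symm_apply] at this
        simpa using this
      show Continuous fun x : invLimit p => Φ x m
      rw [this]
      exact continuous_of_discreteTopology.comp
        ((continuous_apply _).comp continuous_subtype_val)
    · -- backward continuity
      apply continuous_induced_rng.2
      apply continuous_pi
      intro n
      have : (fun h : Φ.range =>
            ((((MonoidHom.ofInjective hΦinj).symm h : invLimit p)) : ∀ n, A n) n) =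
          (fun h : Φ.range => extract e n ((h : Equiv.Perm ℕ) (e ⟨n, 1⟩))) := by
        funext h
        obtain ⟨x, hx⟩ := h.2
        have hval : (h : Equiv.Perm ℕ) = Φ x := hx.symm
        have hsymm : (MonoidHom.ofInjective hΦinj).symm h = x := by
          apply hΦinj
          rw [MonoidHom.apply_ofInjective_symm, hval]
        rw [hsymm, hval, hext x n]
      show Continuous fun h : Φ.range =>
        ((((MonoidHom.ofInjective hΦinj).symm h : invLimit p)) : ∀ n, A n) n
      rw [this]
      exact (continuous_of_discreteTopology (f := extract e n)).comp
        ((heval (e ⟨n, 1⟩)).comp continuous_subtype_val)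
end

section
/- Let 𝒞 be the collection of closed subgroups of Perm(ℕ) (with the pointwise convergence topology), equipped with the σ-algebra generated by the sets 𝒞_U = {G ∈ 𝒞 : G ∩ U ≠ ∅} for U open in Perm(ℕ) (the Effros Borel structure). For k ∈ ℕ and a closed subgroup G, let Stab_G(k) = {g ∈ G : g(i) = i for all i < k}. Then the set of all G ∈ 𝒞 such that for every n there exists k > n with the normal closure of Stab_G(k) in G contained in Stab_G(n) — i.e., the set of procountable closed subgroups of Perm(ℕ) — is measurable with respect to this σ-algebra. -/
/-- The space of closed subgroups of `Perm ℕ`. -/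
def ClosedSubgroupPerm : Type :=
  {H : Subgroup (Equiv.Perm ℕ) // IsClosed (H : Set (Equiv.Perm ℕ))}

/-- The Effros Borel structure on the closed subgroups of `Perm ℕ`: the
σ-algebra generated by the sets `{G : G ∩ U ≠ ∅}`, for `U` open. -/
def effrosSigma : MeasurableSpace ClosedSubgroupPerm :=
  MeasurableSpace.generateFrom
    {C | ∃ U : Set (Equiv.Perm ℕ), IsOpen U ∧
      C = {G : ClosedSubgroupPerm | ((G.1 : Set (Equiv.Perm ℕ)) ∩ U).Nonempty}}

/-- The pointwise stabilizer `Stab_G(k)` of `{0, …, k-1}`, as a set of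
elements of the closed subgroup `G`. -/
def stabSet (G : Subgroup (Equiv.Perm ℕ)) (k : ℕ) : Set G :=
  {g | ∀ i < k, (g : Equiv.Perm ℕ) i = i}

lemma perm_apply_continuous (j : ℕ) :
    Continuous (fun π : Equiv.Perm ℕ => (π : ℕ → ℕ) j) :=
  (continuous_apply j).comp continuous_induced_dom

def U1 (j i : ℕ) : Set (Equiv.Perm ℕ) := {π | π j = i}

def U2 (j k : ℕ) : Set (Equiv.Perm ℕ) := {π | (∀ m < k, π m = m) ∧ π j ≠ j}

lemma U1_open (j i : ℕ) : IsOpen (U1 j i) :=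
  (perm_apply_continuous j).isOpen_preimage {i} (isOpen_discrete _)

lemma U2_open (j k : ℕ) : IsOpen (U2 j k) := by
  have h1 : U2 j k = (⋂ m ∈ Finset.range k, U1 m m) ∩ {π : Equiv.Perm ℕ | π j ≠ j} := by
    ext π
    simp [U2, U1, Set.mem_iInter, Finset.mem_range]
  rw [h1]
  refine IsOpen.inter (isOpen_biInter_finset fun m _ => U1_open m m) ?_
  exact (perm_apply_continuous j).isOpen_preimage {j}ᶜ (isOpen_discrete _)

lemma key (G : Subgroup (Equiv.Perm ℕ)) (n k : ℕ) :
    (∀ g ∈ Subgroup.normalClosure (stabSet G k),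
        ∀ i < n, ((g : ↥G) : Equiv.Perm ℕ) i = i)
    ↔ ∀ i < n, ∀ j : ℕ,
        ¬ ((∃ h ∈ G, h j = i) ∧ ∃ s ∈ G, (∀ m < k, s m = m) ∧ s j ≠ j) := by
  constructor
  · intro hyp i hi j ⟨⟨h, hG, hji⟩, ⟨s, sG, sfix, sj⟩⟩
    set h' : ↥G := ⟨h, hG⟩
    set s' : ↥G := ⟨s, sG⟩
    have hs' : s' ∈ stabSet G k := sfix
    have hmem : h' * s' * h'⁻¹ ∈ Subgroup.normalClosure (stabSet G k) :=
      Subgroup.conjugatesOfSet_subset_normalClosure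
        (Group.mem_conjugatesOfSet_iff.2 ⟨s', hs', isConj_iff.2 ⟨h', rfl⟩⟩)
    have := hyp _ hmem i hi
    have hcoe : ((h' * s' * h'⁻¹ : ↥G) : Equiv.Perm ℕ) = h * s * h⁻¹ := rfl
    rw [hcoe] at this
    simp only [Equiv.Perm.mul_apply] at this
    have hinv : h⁻¹ i = j := by
      rw [← hji]; exact h.symm_apply_apply j
    rw [hinv] at this
    exact sj (h.injective (by rw [this, hji]))
  · intro hyp g hg
    refine Subgroup.closure_induction ?_ ?_ ?_ ?_ hg
    · intro x hx i hi
      obtain ⟨s', hs', hconj⟩ := Group.mem_conjugatesOfSet_iff.1 hx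
      obtain ⟨u, hu⟩ := isConj_iff.1 hconj
      have hx' : (x : Equiv.Perm ℕ) = (u : Equiv.Perm ℕ) * s' * (u : Equiv.Perm ℕ)⁻¹ := by
        rw [← hu]; rfl
      rw [hx']
      simp only [Equiv.Perm.mul_apply]
      set j := ((u : Equiv.Perm ℕ))⁻¹ i with hj
      have huj : (u : Equiv.Perm ℕ) j = i := (u : Equiv.Perm ℕ).apply_symm_apply i
      by_cases hsj : (s' : Equiv.Perm ℕ) j = j
      · rw [hsj, huj]
      · exact absurd ⟨⟨↑u, u.2, huj⟩, ⟨↑s', s'.2, hs', hsj⟩⟩ (hyp i hi j)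
    · intro i hi; rfl
    · intro x y hx hy hx' hy' i hi
      have : ((x * y : ↥G) : Equiv.Perm ℕ) = (x : Equiv.Perm ℕ) * y := rfl
      rw [this, Equiv.Perm.mul_apply, hy' i hi, hx' i hi]
    · intro x hx hx' i hi
      have : ((x⁻¹ : ↥G) : Equiv.Perm ℕ) = (x : Equiv.Perm ℕ)⁻¹ := rfl
      rw [this]
      have := hx' i hi
      conv_lhs => rw [← this]
      exact (x : Equiv.Perm ℕ).symm_apply_apply i

/-- The set of procountable closed subgroups of `Perm ℕ` — those `G` such that
for every `n` there is `k > n` with the normal closure of `Stab_G(k)` in `G`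
contained in `Stab_G(n)` — is measurable for the Effros Borel structure. -/
theorem procountable_measurable :
    @MeasurableSet ClosedSubgroupPerm effrosSigma
      {G : ClosedSubgroupPerm | ∀ n : ℕ, ∃ k : ℕ, k > n ∧
        ∀ g ∈ Subgroup.normalClosure (stabSet G.1 k),
          ∀ i < n, ((g : ↥G.1) : Equiv.Perm ℕ) i = i} := by
  letI := effrosSigma
  have hP : ∀ V : Set (Equiv.Perm ℕ), IsOpen V →
      MeasurableSet {G : ClosedSubgroupPerm | ((G.1 : Set (Equiv.Perm ℕ)) ∩ V).Nonempty} :=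
    fun V hV => MeasurableSpace.measurableSet_generateFrom ⟨V, hV, rfl⟩
  have hset : {G : ClosedSubgroupPerm | ∀ n : ℕ, ∃ k : ℕ, k > n ∧
        ∀ g ∈ Subgroup.normalClosure (stabSet G.1 k),
          ∀ i < n, ((g : ↥G.1) : Equiv.Perm ℕ) i = i}
      = ⋂ n : ℕ, ⋃ k : ℕ, ⋃ _ : k > n, ⋂ i : ℕ, ⋂ _ : i < n, ⋂ j : ℕ,
          ({G : ClosedSubgroupPerm | ((G.1 : Set (Equiv.Perm ℕ)) ∩ U1 j i).Nonempty}
            ∩ {G : ClosedSubgroupPerm | ((G.1 : Set (Equiv.Perm ℕ)) ∩ U2 j k).Nonempty})ᶜ := by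
    ext G
    simp only [Set.mem_setOf_eq, Set.mem_iInter, Set.mem_iUnion, Set.mem_compl_iff,
      Set.mem_inter_iff, not_and, exists_prop]
    refine forall_congr' fun n => exists_congr fun k => and_congr_right fun _ => ?_
    rw [key G.1 n k]
    constructor
    · intro H i hi j hne
      intro h2
      obtain ⟨h, hG, hji⟩ := hne
      obtain ⟨s, sG, hs⟩ := h2
      exact H i hi j ⟨⟨h, hG, hji⟩, ⟨s, sG, hs.1, hs.2⟩⟩
    · intro H i hi j ⟨⟨h, hG, hji⟩, ⟨s, sG, sfix, sj⟩⟩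
      exact H i hi j ⟨h, hG, hji⟩ ⟨s, sG, sfix, sj⟩
  rw [hset]
  refine MeasurableSet.iInter fun n => MeasurableSet.iUnion fun k =>
    MeasurableSet.iUnion fun _ => MeasurableSet.iInter fun i =>
    MeasurableSet.iInter fun _ => MeasurableSet.iInter fun j => ?_
  exact ((hP _ (U1_open j i)).inter (hP _ (U2_open j k))).compl
end
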